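/- arXiv:2308.00273 — 8 statements merged into one kernel-verified Lean document; each statement's English description precedes it below -/
import Mathlib

section
/- Let (X_1,d_1),...,(X_m,d_m) be compact metric spaces and, for each i, let G_i be a group acting on X_i. Equip the product X_1 × ... × X_m with the metric d((A_1,...,A_m),(A_1',...,A_m')) = d_1(A_1,A_1') + ... + d_m(A_m,A_m'). Suppose f : X_1 × ... × X_m → ℝ is uniformly continuous and invariant under the product action of G_1 × ... × G_m, and suppose that for every δ > 0 and every i ∈ [m] the space X_i admits a (δ, a_i, G_i)-sketch for some a_i ∈ ℕ (possibly depending on δ). Then for every ε > 0 there exist natural numbers a_1,...,a_m, continuous G_i-invariant functions φ_i : X_i → ℝ^{a_i} for each i ∈ [m], and a continuous function ρ : ℝ^{a_1} × ... × ℝ^{a_m} → ℝ such that |f(A_1,...,A_m) − ρ(φ_1(A_1),...,φ_m(A_m))| < ε for every (A_1,...,A_m) ∈ X_1 × ... × X_m. -/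
/-- Lemma 3.2 of the paper.
Let `(X i, d i)` for `i ∈ Fin m` be compact metric spaces, each acted on by a group `G i`.
Equip the product with the sum metric.  If `f` is uniformly continuous (w.r.t. the sum
metric) and invariant under the product action `G 1 × ⋯ × G m`, and every `X i` admits a
`(δ, aᵢ, G i)`-sketch for every `δ > 0`, then for every `ε > 0` there are `a i ∈ ℕ`,
continuous `G i`-invariant maps `φ i : X i → ℝ^(a i)`, and a continuous
`ρ : ℝ^(a 1) × ⋯ × ℝ^(a m) → ℝ` with `|f A - ρ (φ ∘ A)| < ε` everywhere. -/
theorem sfgi_product_function_approximation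
    (m : ℕ)
    (X : Fin m → Type*) [∀ i, MetricSpace (X i)] [∀ i, CompactSpace (X i)]
    (G : Fin m → Type*) [∀ i, Group (G i)] [∀ i, MulAction (G i) (X i)]
    (f : (∀ i, X i) → ℝ)
    (hf_unif : ∀ ε : ℝ, 0 < ε → ∃ δ : ℝ, 0 < δ ∧ ∀ A A' : (∀ i, X i),
      (∑ i, dist (A i) (A' i)) < δ → |f A - f A'| < ε)
    (hf_inv : ∀ (π : ∀ i, G i) (A : ∀ i, X i), f (fun i => π i • A i) = f A)
    (hsketch : ∀ δ : ℝ, 0 < δ → ∀ i : Fin m, ∃ (a : ℕ)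
      (h : X i → (Fin a → ℝ)) (g : (Fin a → ℝ) → X i),
      Continuous h ∧ (∀ (π : G i) (x : X i), h (π • x) = h x) ∧
      Continuous g ∧ (∀ S : X i, dist (g (h S)) S < δ))
    (ε : ℝ) (hε : 0 < ε) :
    ∃ (a : Fin m → ℕ) (φ : ∀ i, X i → (Fin (a i) → ℝ))
      (ρ : (∀ i, Fin (a i) → ℝ) → ℝ),
      (∀ i, Continuous (φ i)) ∧
      (∀ (i : Fin m) (π : G i) (x : X i), φ i (π • x) = φ i x) ∧
      Continuous ρ ∧
      (∀ A : (∀ i, X i), |f A - ρ (fun i => φ i (A i))| < ε) := by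
  obtain ⟨δ, hδ, hδf⟩ := hf_unif ε hε
  -- f is continuous in the product topology
  have hfc : Continuous f := by
    rw [Metric.continuous_iff]
    intro b ε' hε'
    obtain ⟨δ', hδ', hδ'f⟩ := hf_unif ε' hε'
    refine ⟨δ' / (m + 1), by positivity, fun a hab => ?_⟩
    have hsum : (∑ i, dist (a i) (b i)) < δ' := by
      calc (∑ i, dist (a i) (b i)) ≤ ∑ _i : Fin m, δ' / (m + 1) := by
            refine Finset.sum_le_sum fun i _ => ?_
            exact le_trans (dist_le_pi_dist a b i) hab.le
        _ = m * (δ' / (m + 1)) := by simp [Finset.sum_const, mul_comm]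
        _ < δ' := by
            rw [mul_div_assoc']
            rw [div_lt_iff₀ (by positivity)]
            nlinarith
    have := hδ'f a b hsum
    simpa [Real.dist_eq] using this
  -- choose sketches at accuracy δ/(m+1)
  have hδm : (0:ℝ) < δ / (m + 1) := by positivity
  choose a h g hhc hinv hgc hclose using hsketch (δ / (m + 1)) hδm
  refine ⟨a, h, fun v => f (fun i => g i (v i)), hhc, hinv, ?_, ?_⟩
  · exact hfc.comp (continuous_pi fun i => (hgc i).comp (continuous_apply i))
  · intro A
    apply hδf
    calc (∑ i, dist (A i) (g i (h i (A i))))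
        ≤ ∑ _i : Fin m, δ / (m + 1) := by
          refine Finset.sum_le_sum fun i _ => ?_
          rw [dist_comm]
          exact (hclose i (A i)).le
      _ = m * (δ / (m + 1)) := by simp [Finset.sum_const, mul_comm]
      _ < δ := by
          rw [mul_div_assoc', div_lt_iff₀ (by positivity)]
          nlinarith
end

section
/- Let (X,d_X) be a compact metric space and G a group acting on X, and equip X^m with the sum metric d((A_1,...,A_m),(A_1',...,A_m')) = Σ_i d_X(A_i,A_i'). Suppose f : X^m → ℝ is uniformly continuous and invariant under the action of G on each factor, and suppose that for every δ > 0 the space X admits a (δ, a(δ), G)-sketch. Then for every ε > 0 there exist a ∈ ℕ, a single continuous G-invariant function φ : X → ℝ^a, and a continuous function ρ : (ℝ^a)^m → ℝ such that |f(A_1,...,A_m) − ρ(φ(A_1),...,φ(A_m))| < ε for every (A_1,...,A_m) ∈ X^m. -/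
/-- Lemma 3.2, equal factors.
Let `(X, d)` be a compact metric space acted on by a group `G`, and equip `X^m` with the
sum metric.  If `f : X^m → ℝ` is uniformly continuous and invariant under the action of
`G` on each factor, and `X` admits a `(δ, a(δ), G)`-sketch for every `δ > 0`, then for
every `ε > 0` there are `a ∈ ℕ`, a single continuous `G`-invariant `φ : X → ℝ^a` and a
continuous `ρ : (ℝ^a)^m → ℝ` with `|f A - ρ (φ ∘ A)| < ε` everywhere. -/
theorem sfgi_product_function_approximation_same_factor
    (m : ℕ) (X : Type*) [MetricSpace X] [CompactSpace X]
    (G : Type*) [Group G] [MulAction G X]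
    (f : (Fin m → X) → ℝ)
    (hf_unif : ∀ ε : ℝ, 0 < ε → ∃ δ : ℝ, 0 < δ ∧ ∀ A A' : Fin m → X,
      (∑ i, dist (A i) (A' i)) < δ → |f A - f A'| < ε)
    (hf_inv : ∀ (π : Fin m → G) (A : Fin m → X), f (fun i => π i • A i) = f A)
    (hsketch : ∀ δ : ℝ, 0 < δ → ∃ (a : ℕ)
      (h : X → (Fin a → ℝ)) (g : (Fin a → ℝ) → X),
      Continuous h ∧ (∀ (π : G) (x : X), h (π • x) = h x) ∧
      Continuous g ∧ (∀ S : X, dist (g (h S)) S < δ))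
    (ε : ℝ) (hε : 0 < ε) :
    ∃ (a : ℕ) (φ : X → (Fin a → ℝ)) (ρ : (Fin m → Fin a → ℝ) → ℝ),
      Continuous φ ∧
      (∀ (π : G) (x : X), φ (π • x) = φ x) ∧
      Continuous ρ ∧
      (∀ A : Fin m → X, |f A - ρ (fun i => φ (A i))| < ε) := by
  obtain ⟨δ, hδ, hδf⟩ := hf_unif ε hε
  have hδ' : 0 < δ / (m + 1) := by positivity
  obtain ⟨a, h, g, hc, hinv, hgc, hgd⟩ := hsketch (δ / (m + 1)) hδ'
  -- f is continuous
  have hfc : Continuous f := by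
    rw [Metric.continuous_iff]
    intro b ε' hε'
    obtain ⟨δ₂, hδ₂, hδ₂f⟩ := hf_unif ε' hε'
    refine ⟨δ₂ / (m + 1), by positivity, fun A hA => ?_⟩
    rw [Real.dist_eq]
    apply hδ₂f
    calc ∑ i, dist (A i) (b i) ≤ ∑ _i : Fin m, δ₂ / (m + 1) := by
          apply Finset.sum_le_sum
          intro i _
          exact le_of_lt (lt_of_le_of_lt (dist_le_pi_dist A b i) hA)
      _ = m * (δ₂ / (m + 1)) := by simp [Finset.sum_const, mul_comm]
      _ < δ₂ := by
          rw [← mul_div_assoc, div_lt_iff₀ (by positivity)]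
          nlinarith [(m.cast_nonneg : (0:ℝ) ≤ m)]
  refine ⟨a, h, fun v => f (fun i => g (v i)), hc, hinv, ?_, ?_⟩
  · exact hfc.comp (continuous_pi fun i => hgc.comp (continuous_apply i))
  · intro A
    apply hδf
    calc ∑ i, dist (A i) (g (h (A i))) ≤ ∑ _i : Fin m, δ / (m + 1) := by
          apply Finset.sum_le_sum
          intro i _
          rw [dist_comm]
          exact le_of_lt (hgd (A i))
      _ = m * (δ / (m + 1)) := by simp [Finset.sum_const, mul_comm]
      _ < δ := by
          rw [← mul_div_assoc, div_lt_iff₀ (by positivity)]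
          nlinarith [(m.cast_nonneg : (0:ℝ) ≤ m)]
end

section
/- Let K ⊆ ℝ^{k×N} be compact and let f : ℝ^{k×N} → ℝ be continuous and invariant under permutations of the N columns. Let t = C(k+N, k) (the binomial coefficient) and let φ : ℝ^k → ℝ^t be the multisymmetric power-sum feature map φ(x) = (x^{α_1},...,x^{α_t}), where α_1,...,α_t enumerate all multi-indices α ∈ ℕ^k with |α| ≤ N and x^α = x_1^{α_1}···x_k^{α_k}. Then for every ε > 0 there exists a polynomial function ρ : ℝ^t → ℝ such that |f(X) − ρ(Σ_{i=1}^N φ(x_i))| < ε for every X ∈ K, where x_1,...,x_N denote the columns of X. -/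
/-!
Multisymmetric power sums of degree at most `N` determine the `N` columns up to order: a linear
functional `ℓ` injective on the finitely many columns of `X` and `Y` turns them into scalars whose
power sums `∑ ℓ(xᵢ)ᵐ` are combinations of multisymmetric power sums, and Newton's identities
recover `N` scalars as a multiset from their first `N` power sums. So `f` factors through the
power-sum map `Φ`; restricted to the compact `K`, `Φ` is a quotient map onto `Φ(K)`, the factor
is continuous on the compact set `Φ(K)`, and Stone–Weierstrass approximates it by polynomials.
-/

open Finset MvPolynomial Topology

theorem Fintype.exists_perm_comp_eq_of_map_univ_eq {ι α : Type*} [Fintype ι]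
    {x y : ι → α} (h : univ.val.map x = univ.val.map y) :
    ∃ σ : Equiv.Perm ι, x ∘ σ = y := by
  classical
  have hfiber (a : α) : Fintype.card {i // y i = a} = Fintype.card {i // x i = a} := by
    have := congrArg (Multiset.count a) h
    simp only [Multiset.count_map] at this
    simp only [Fintype.card_subtype, Finset.card, Finset.filter_val, eq_comm (b := a)]
    exact this.symm
  exact ⟨Equiv.ofFiberEquiv fun a => Fintype.equivOfCardEq (hfiber a),
    funext (Equiv.ofFiberEquiv_map _)⟩

theorem map_univ_eq_of_sum_pow_eq {ι K : Type*} [Fintype ι] [Field K] [CharZero K]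
    {x y : ι → K} (h : ∀ m, 1 ≤ m → m ≤ Fintype.card ι → ∑ i, x i ^ m = ∑ i, y i ^ m) :
    univ.val.map x = univ.val.map y := by
  have newton (z : ι → K) (m : ℕ) : (m : K) * (univ.val.map z).esymm m = (-1) ^ (m + 1) *
      ∑ a ∈ antidiagonal m with a.1 < m,
        (-1) ^ a.1 * (univ.val.map z).esymm a.1 * ∑ i, z i ^ a.2 := by
    simpa only [map_mul, map_sum, map_pow, map_neg, map_one, map_natCast,
      MvPolynomial.aeval_esymm_eq_multiset_esymm, MvPolynomial.psum, MvPolynomial.aeval_X] using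
      congrArg (MvPolynomial.aeval z) (MvPolynomial.mul_esymm_eq_sum ι K m)
  have hesymm : ∀ m ≤ Fintype.card ι, (univ.val.map x).esymm m = (univ.val.map y).esymm m := by
    intro m
    induction m using Nat.strong_induction_on with
    | _ m ih =>
      intro hm
      rcases Nat.eq_zero_or_pos m with rfl | hpos
      · simp [Multiset.esymm]
      refine mul_left_cancel₀ (Nat.cast_ne_zero.mpr hpos.ne' : (m : K) ≠ 0) ?_
      rw [newton x m, newton y m]
      congr 1
      refine sum_congr rfl fun a ha => ?_
      rw [mem_filter, HasAntidiagonal.mem_antidiagonal] at ha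
      rw [ih a.1 ha.2 (by omega), h a.2 (by omega) (by omega)]
  have hprod : ((univ.val.map x).map (fun t => Polynomial.X - Polynomial.C t)).prod
      = ((univ.val.map y).map (fun t => Polynomial.X - Polynomial.C t)).prod := by
    rw [Multiset.prod_X_sub_X_eq_sum_esymm, Multiset.prod_X_sub_X_eq_sum_esymm]
    simp only [Multiset.card_map, card_val, card_univ]
    exact sum_congr rfl fun j hj => by rw [hesymm j (by simpa [Nat.lt_succ_iff] using hj)]
  simpa only [Polynomial.roots_multiset_prod_X_sub_C] using congrArg Polynomial.roots hprod

theorem Module.Dual.exists_injOn {K V : Type*} [Field K] [Infinite K] [AddCommGroup V]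
    [Module K V] {s : Set V} (hs : s.Finite) : ∃ f : Module.Dual K V, Set.InjOn f s := by
  have : Finite {p : s × s // p.1 ≠ p.2} := by
    have := hs.to_subtype; infer_instance
  obtain ⟨f, hf⟩ := Module.exists_dual_forall_apply_ne_zero (K := K)
    (fun p : {p : s × s // p.1 ≠ p.2} => (p.1.1 : V) - p.1.2)
    fun p => sub_ne_zero.mpr (Subtype.coe_ne_coe.mpr p.2)
  refine ⟨f, fun u hu v hv huv => by_contra fun hne => hf ⟨(⟨u, hu⟩, ⟨v, hv⟩), ?_⟩ ?_⟩
  · simpa using hne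
  · simp [huv]

theorem Module.Dual.pow_apply_eq_sum_piAntidiag {κ K : Type*} [Fintype κ] [DecidableEq κ] [Field K]
    (f : Module.Dual K (κ → K)) (z : κ → K) (m : ℕ) :
    f z ^ m = ∑ α ∈ piAntidiag univ m,
      (Nat.multinomial univ α * ∏ j, f (Pi.single j 1) ^ α j) * ∏ j, z j ^ α j := by
  have hlin : f z = ∑ j, f (Pi.single j 1) * z j := by
    rw [LinearMap.pi_apply_eq_sum_univ f z]
    refine sum_congr rfl fun j _ => ?_
    rw [smul_eq_mul, mul_comm]
    congr 2
    ext i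
    simp [Pi.single_apply, eq_comm]
  simp only [hlin, sum_pow_eq_sum_piAntidiag, mul_pow, prod_mul_distrib, mul_assoc]

theorem exists_perm_comp_eq_of_sum_prod_pow_eq {ι κ K : Type*} [Fintype ι] [Fintype κ]
    [Field K] [CharZero K] {x y : ι → κ → K}
    (h : ∀ α : κ → ℕ, ∑ j, α j ≤ Fintype.card ι →
      ∑ i, ∏ j, x i j ^ α j = ∑ i, ∏ j, y i j ^ α j) :
    ∃ σ : Equiv.Perm ι, x ∘ σ = y := by
  classical
  obtain ⟨f, hf⟩ := Module.Dual.exists_injOn (K := K)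
    ((Set.finite_range x).union (Set.finite_range y))
  have hpow : ∀ m, 1 ≤ m → m ≤ Fintype.card ι → ∑ i, f (x i) ^ m = ∑ i, f (y i) ^ m := by
    intro m _ hm
    have expand (z : κ → K) := f.pow_apply_eq_sum_piAntidiag z m
    simp only [expand, sum_comm (s := univ), ← mul_sum]
    refine sum_congr rfl fun α hα => ?_
    rw [h α ((mem_piAntidiag.mp hα).1.trans_le hm)]
  obtain ⟨σ, hσ⟩ := Fintype.exists_perm_comp_eq_of_map_univ_eq (map_univ_eq_of_sum_pow_eq hpow)
  exact ⟨σ, funext fun i => hf (Or.inl ⟨σ i, rfl⟩) (Or.inr ⟨i, rfl⟩) (congrFun hσ i)⟩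

theorem IsCompact.exists_continuousMap_image_comp_eq {X Y Z : Type*} [TopologicalSpace X]
    [TopologicalSpace Y] [T2Space Y] [TopologicalSpace Z] {K : Set X} (hK : IsCompact K)
    {Φ : X → Y} (hΦ : ContinuousOn Φ K) {f : X → Z} (hf : ContinuousOn f K)
    (hfib : ∀ x ∈ K, ∀ y ∈ K, Φ x = Φ y → f x = f y) :
    ∃ g : C(Φ '' K, Z), ∀ x (hx : x ∈ K), g ⟨Φ x, Set.mem_image_of_mem Φ hx⟩ = f x := by
  have := isCompact_iff_compactSpace.mp hK
  let q : C(K, Φ '' K) := ⟨Set.imageFactorization Φ K, hΦ.domRestrict.subtype_mk _⟩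
  have hq : IsQuotientMap q :=
    q.continuous.isClosedMap.isQuotientMap q.continuous Set.imageFactorization_surjective
  let fK : C(K, Z) := ⟨K.domRestrict f, hf.domRestrict⟩
  have hfK : Function.FactorsThrough fK q := fun a b hab => hfib a a.2 b b.2 congr($hab.1)
  exact ⟨hq.lift fK hfK, fun x hx => DFunLike.congr_fun (hq.lift_comp fK hfK) ⟨x, hx⟩⟩

theorem MvPolynomial.exists_near_continuousMap {ι : Type*} {S : Set (ι → ℝ)} [CompactSpace S]
    (g : C(S, ℝ)) {ε : ℝ} (hε : 0 < ε) :
    ∃ q : MvPolynomial ι ℝ, ∀ z : S, |g z - eval (z : ι → ℝ) q| < ε := by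
  let coord (i : ι) : C(S, ℝ) :=
    ⟨fun z => (z : ι → ℝ) i, (continuous_apply i).comp continuous_subtype_val⟩
  have heval (q : MvPolynomial ι ℝ) (z : S) : aeval coord q z = eval (z : ι → ℝ) q := by
    simpa [coe_aeval_eq_eval, coord] using
      congr($(comp_aeval coord (ContinuousMap.evalAlgHom ℝ ℝ z)) q)
  have hsep : (aeval (R := ℝ) coord).range.SeparatesPoints := by
    intro z z' hne
    obtain ⟨i, hi⟩ := Function.ne_iff.mp (Subtype.coe_ne_coe.mpr hne)
    exact ⟨coord i, ⟨coord i, ⟨X i, aeval_X _ _⟩, rfl⟩, hi⟩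
  obtain ⟨⟨p, q, rfl⟩, hp⟩ :=
    ContinuousMap.exists_mem_subalgebra_near_continuous_of_separatesPoints _ hsep g g.continuous
      ε hε
  exact ⟨q, fun z => by rw [abs_sub_comm, ← heval]; exact hp z⟩

/-- DeepSets universality via multisymmetric power sums,
`t = C(k+N, k)`.  Let `K ⊆ ℝ^{k×N}` be compact and `f : ℝ^{k×N} → ℝ` continuous and
invariant under permutations of the `N` columns.  Let `e` enumerate all multi-indices
`α ∈ ℕ^k` with `|α| ≤ N` by `Fin (C(k+N,k))`, and let `φ : ℝ^k → ℝ^t` be the power-sum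
feature map `φ(x)ₜ = x^{αₜ}`.  Then for every `ε > 0` there is a polynomial function
`ρ : ℝ^t → ℝ` with `|f X - ρ (∑ i, φ (column i of X))| < ε` for all `X ∈ K`. -/
theorem deepsets_universality_power_sums
    (k N : ℕ) (K : Set (Matrix (Fin k) (Fin N) ℝ)) (hK : IsCompact K)
    (f : Matrix (Fin k) (Fin N) ℝ → ℝ) (hf : Continuous f)
    (hf_inv : ∀ (X : Matrix (Fin k) (Fin N) ℝ) (σ : Equiv.Perm (Fin N)),
      f (fun r c => X r (σ c)) = f X)
    (e : Fin ((k + N).choose k) ≃ {α : Fin k → ℕ // (∑ j, α j) ≤ N})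
    (ε : ℝ) (hε : 0 < ε) :
    ∃ q : MvPolynomial (Fin ((k + N).choose k)) ℝ,
      ∀ X ∈ K,
        |f X - MvPolynomial.eval
            (∑ i : Fin N, fun t : Fin ((k + N).choose k) =>
              ∏ j : Fin k, X j i ^ ((e t : Fin k → ℕ) j)) q| < ε := by
  set Φ : Matrix (Fin k) (Fin N) ℝ → (Fin ((k + N).choose k) → ℝ) := fun X =>
    ∑ i : Fin N, fun t => ∏ j : Fin k, X j i ^ ((e t : Fin k → ℕ) j)
  have hΦ : Continuous Φ := by fun_prop
  have hfib (X Y : Matrix (Fin k) (Fin N) ℝ) (hXY : Φ X = Φ Y) : f X = f Y := by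
    obtain ⟨σ, hσ⟩ := exists_perm_comp_eq_of_sum_prod_pow_eq (x := X.transpose) (y := Y.transpose)
      fun α hα => by simpa [Φ] using congrFun hXY (e.symm ⟨α, by simpa using hα⟩)
    rw [← hf_inv X σ]
    congr 1
    ext r c
    exact congr_fun₂ hσ c r
  obtain ⟨g, hg⟩ := hK.exists_continuousMap_image_comp_eq hΦ.continuousOn hf.continuousOn
    fun X _ Y _ => hfib X Y
  have := isCompact_iff_compactSpace.mp (hK.image hΦ)
  obtain ⟨q, hq⟩ := MvPolynomial.exists_near_continuousMap g hε
  exact ⟨q, fun X hX => by simpa [hg X hX] using hq ⟨Φ X, Set.mem_image_of_mem Φ hX⟩⟩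
end

section
/- Consider the polynomial ring ℝ[x_{i,j} : 1 ≤ i ≤ N, 1 ≤ j ≤ k] and the action of the symmetric group S_N permuting the N families x_i = (x_{i,1},...,x_{i,k}). The subalgebra of polynomials invariant under this action (the algebra of multisymmetric polynomials in N families of k variables over ℝ) is generated, as an ℝ-algebra, by the elementary multisymmetric power sums p_α = Σ_{i=1}^N x_i^α for multi-indices α ∈ ℕ^k with 1 ≤ |α| ≤ N. In particular, every multisymmetric polynomial p can be written as p = q(p_{α_1},...,p_{α_t}) for some real polynomial q in t = C(k+N, k) variables, where α_1,...,α_t enumerate all α ∈ ℕ^k with |α| ≤ N. -/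
/-- The multisymmetric power sum `p_α = ∑ i, x_i^α` of multi-degree `α ∈ ℕ^k`, viewed as
a polynomial in `N` families `x_1, …, x_N` of `k` variables, i.e. in the variables
indexed by `Fin N × Fin k`. -/
noncomputable def multisymPowerSum (k N : ℕ) (α : Fin k → ℕ) :
    MvPolynomial (Fin N × Fin k) ℝ :=
  ∑ i : Fin N, ∏ j : Fin k, (MvPolynomial.X (i, j)) ^ (α j)

namespace Briand
open MvPolynomial

variable (k N : ℕ)

noncomputable def xpow (a : Fin N) (γ : Fin k → ℕ) : MvPolynomial (Fin N × Fin k) ℝ :=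
  ∏ j : Fin k, (MvPolynomial.X (a, j)) ^ (γ j)

theorem xpow_add (a : Fin N) (γ δ : Fin k → ℕ) :
    xpow k N a (γ + δ) = xpow k N a γ * xpow k N a δ := by
  simp [xpow, pow_add, Finset.prod_mul_distrib]

theorem psum_eq (γ : Fin k → ℕ) :
    multisymPowerSum k N γ = ∑ a : Fin N, xpow k N a γ := rfl

noncomputable def T (r : ℕ) (β : Fin r → Fin k → ℕ) : MvPolynomial (Fin N × Fin k) ℝ :=
  ∑ f : Fin r ↪ Fin N, ∏ i : Fin r, xpow k N (f i) (β i)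

theorem T_zero (β : Fin 0 → Fin k → ℕ) : T k N 0 β = 1 := by
  simp [T]

theorem T_eq_zero_of_lt {r : ℕ} (h : N < r) (β : Fin r → Fin k → ℕ) : T k N r β = 0 := by
  haveI : IsEmpty (Fin r ↪ Fin N) := by
    constructor
    intro f
    have := Fintype.card_le_of_injective f f.inj'
    simp only [Fintype.card_fin] at this
    omega
  simp [T]
theorem mul_T (r : ℕ) (γ : Fin k → ℕ) (β : Fin r → Fin k → ℕ) :
    multisymPowerSum k N γ * T k N r β =
      T k N (r + 1) (Fin.cons γ β) +
        ∑ j : Fin r, T k N r (Function.update β j (γ + β j)) := by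
  classical
  rw [psum_eq, T, Finset.sum_mul_sum]
  rw [Finset.sum_comm]
  have hsplit : ∀ g : Fin r ↪ Fin N,
      (∑ a : Fin N, xpow k N a γ * ∏ i, xpow k N (g i) (β i)) =
        (∑ a ∈ Finset.univ.filter (fun a => a ∉ Set.range ⇑g),
            xpow k N a γ * ∏ i, xpow k N (g i) (β i)) +
        (∑ a ∈ Finset.univ.filter (fun a => a ∈ Set.range ⇑g),
            xpow k N a γ * ∏ i, xpow k N (g i) (β i)) := by
    intro g
    rw [← Finset.sum_filter_add_sum_filter_not Finset.univ
      (fun a => a ∉ Set.range ⇑g) (fun a => xpow k N a γ * ∏ i, xpow k N (g i) (β i))]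
    congr 2
    ext a
    simp [not_not]
  calc
    ∑ g : Fin r ↪ Fin N, ∑ a : Fin N, xpow k N a γ * ∏ i, xpow k N (g i) (β i)
      = (∑ g : Fin r ↪ Fin N, ∑ a ∈ Finset.univ.filter (fun a => a ∉ Set.range ⇑g),
            xpow k N a γ * ∏ i, xpow k N (g i) (β i)) +
        (∑ g : Fin r ↪ Fin N, ∑ a ∈ Finset.univ.filter (fun a => a ∈ Set.range ⇑g),
            xpow k N a γ * ∏ i, xpow k N (g i) (β i)) := by
        rw [← Finset.sum_add_distrib]
        exact Finset.sum_congr rfl fun g _ => hsplit g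
    _ = T k N (r + 1) (Fin.cons γ β) +
        ∑ j : Fin r, T k N r (Function.update β j (γ + β j)) := by
        congr 1
        · -- part 1
          rw [Finset.sum_sigma', T]
          refine Finset.sum_bij'
            (i := fun p hp => (⟨Fin.cons p.2 ⇑p.1, by
              rw [Fin.cons_injective_iff]
              refine ⟨?_, p.1.inj'⟩
              have h2 := (Finset.mem_sigma.mp hp).2
              simpa using (Finset.mem_filter.mp h2).2⟩ : Fin (r+1) ↪ Fin N))
            (j := fun f _ => (⟨⟨⇑f ∘ Fin.succ, f.inj'.comp (Fin.succ_injective r)⟩, f 0⟩ :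
              Σ _g : Fin r ↪ Fin N, Fin N))
            (fun _ _ => Finset.mem_univ _) ?_ ?_ ?_ ?_
          · intro f _
            rw [Finset.mem_sigma]
            refine ⟨Finset.mem_univ _, Finset.mem_filter.mpr ⟨Finset.mem_univ _, ?_⟩⟩
            rintro ⟨i, hi⟩
            exact (Fin.succ_ne_zero i) (f.inj' hi)
          · rintro ⟨g, a⟩ _
            refine Sigma.ext ?_ ?_
            · ext i
              simp
            · simp
          · intro f _
            ext i
            refine Fin.cases ?_ ?_ i <;> simp
          · rintro ⟨g, a⟩ _
            rw [Fin.prod_univ_succ]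
            simp
        · -- part 2
          have h1 : ∀ g : Fin r ↪ Fin N,
              (∑ a ∈ Finset.univ.filter (fun a => a ∈ Set.range ⇑g),
                xpow k N a γ * ∏ i, xpow k N (g i) (β i)) =
              ∑ j : Fin r, xpow k N (g j) γ * ∏ i, xpow k N (g i) (β i) := by
            intro g
            refine (Finset.sum_bij (i := fun j _ => g j) ?_ ?_ ?_ ?_).symm
            · intro j _
              exact Finset.mem_filter.mpr ⟨Finset.mem_univ _, ⟨j, rfl⟩⟩
            · intro j1 _ j2 _ h
              exact g.inj' h
            · intro a ha
              obtain ⟨j, hj⟩ := (Finset.mem_filter.mp ha).2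
              exact ⟨j, Finset.mem_univ _, hj⟩
            · intro j _
              rfl
          rw [Finset.sum_congr rfl fun g _ => h1 g, Finset.sum_comm]
          refine Finset.sum_congr rfl fun j _ => ?_
          rw [T]
          refine Finset.sum_congr rfl fun g _ => ?_
          have hfun : (fun i => xpow k N (g i) (Function.update β j (γ + β j) i)) =
              Function.update (fun i => xpow k N (g i) (β i)) j
                (xpow k N (g j) (γ + β j)) := by
            funext i
            rcases eq_or_ne i j with rfl | h
            · simp
            · simp [Function.update_of_ne h]
          rw [hfun, Finset.prod_update_of_mem (Finset.mem_univ j), xpow_add,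
            ← Finset.mul_prod_erase Finset.univ (fun i => xpow k N (g i) (β i))
              (Finset.mem_univ j), ← Finset.sdiff_singleton_eq_erase]
          ring
theorem T_succ (r : ℕ) (β : Fin (r + 1) → Fin k → ℕ) :
    T k N (r + 1) β =
      multisymPowerSum k N (β 0) * T k N r (Fin.tail β) -
        ∑ j : Fin r, T k N r (Function.update (Fin.tail β) j (β 0 + Fin.tail β j)) := by
  have h := mul_T k N r (β 0) (Fin.tail β)
  rw [Fin.cons_self_tail β] at h
  rw [eq_sub_iff_add_eq, add_comm, h]
  ring

theorem psum_of_eq_zero {γ : Fin k → ℕ} (h : (∑ j, γ j) = 0) :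
    multisymPowerSum k N γ = (N : MvPolynomial (Fin N × Fin k) ℝ) := by
  have hj : ∀ j, γ j = 0 := by
    intro j
    exact (Finset.sum_eq_zero_iff.mp h) j (Finset.mem_univ j)
  simp [multisymPowerSum, hj]

theorem psum_mem_of_le {A : Subalgebra ℝ (MvPolynomial (Fin N × Fin k) ℝ)} {m : ℕ}
    (hA : ∀ γ : Fin k → ℕ, 0 < (∑ j, γ j) → (∑ j, γ j) ≤ m → multisymPowerSum k N γ ∈ A)
    {γ : Fin k → ℕ} (h : (∑ j, γ j) ≤ m) : multisymPowerSum k N γ ∈ A := by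
  rcases Nat.eq_zero_or_pos (∑ j, γ j) with h0 | h0
  · rw [psum_of_eq_zero k N h0]
    exact A.natCast_mem N
  · exact hA γ h0 h

theorem sum_update_sum (r : ℕ) (t : Fin r → Fin k → ℕ) (j : Fin r) (γ : Fin k → ℕ) :
    (∑ i, ∑ j', Function.update t j (γ + t j) i j') = (∑ j', γ j') + ∑ i, ∑ j', t i j' := by
  classical
  have h1 : (fun i => ∑ j', Function.update t j (γ + t j) i j') =
      Function.update (fun i => ∑ j', t i j') j (∑ j', (γ + t j) j') := by
    funext i
    rcases eq_or_ne i j with rfl | h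
    · simp
    · simp [Function.update_of_ne h]
  rw [h1, Finset.sum_update_of_mem (Finset.mem_univ j),
    ← Finset.add_sum_erase Finset.univ (fun i => ∑ j', t i j') (Finset.mem_univ j)]
  simp [Finset.sum_add_distrib, add_assoc, Finset.sdiff_singleton_eq_erase]

theorem T_mem {A : Subalgebra ℝ (MvPolynomial (Fin N × Fin k) ℝ)} {m : ℕ}
    (hA : ∀ γ : Fin k → ℕ, 0 < (∑ j, γ j) → (∑ j, γ j) ≤ m → multisymPowerSum k N γ ∈ A) :
    ∀ (r : ℕ) (β : Fin r → Fin k → ℕ), (∑ i, ∑ j, β i j) ≤ m → T k N r β ∈ A := by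
  intro r
  induction r with
  | zero => intro β _; rw [T_zero]; exact A.one_mem
  | succ r ih =>
    intro β hβ
    rw [T_succ]
    have htot : (∑ j, β 0 j) + (∑ i, ∑ j, Fin.tail β i j) = ∑ i, ∑ j, β i j := by
      rw [Fin.sum_univ_succ (f := fun i => ∑ j, β i j)]
      rfl
    refine sub_mem (mul_mem ?_ (ih _ ?_)) (sum_mem fun j _ => ih _ ?_)
    · exact psum_mem_of_le k N hA (by omega)
    · omega
    · rw [sum_update_sum]
      have : (∑ j', β 0 j') + ∑ i, ∑ j', Fin.tail β i j' ≤ m := by omega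
      omega
theorem T_one (β : Fin 1 → Fin k → ℕ) : T k N 1 β = multisymPowerSum k N (β 0) := by
  rw [T_succ]
  simp [T_zero]

theorem T_key (d : ℕ) {A : Subalgebra ℝ (MvPolynomial (Fin N × Fin k) ℝ)}
    (hA : ∀ γ : Fin k → ℕ, 0 < (∑ j, γ j) → (∑ j, γ j) < d → multisymPowerSum k N γ ∈ A) :
    ∀ (r : ℕ) (β : Fin (r + 1) → Fin k → ℕ), (∀ i, 0 < ∑ j, β i j) →
      (∑ i, ∑ j, β i j) = d →
      T k N (r + 1) β - ((-1 : ℝ) ^ r * ((r.factorial : ℕ) : ℝ)) • multisymPowerSum k N (∑ i, β i) ∈ A := by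
  intro r
  induction r with
  | zero =>
    intro β _ _
    have : ((-1 : ℝ) ^ 0 * ((Nat.factorial 0 : ℕ) : ℝ)) = 1 := by norm_num
    rw [T_one, this, one_smul, Fin.sum_univ_one, sub_self]
    exact zero_mem A
  | succ r ih =>
    intro β hpos htot
    classical
    set γ := β 0 with hγ
    set t := Fin.tail β with ht
    have htpos : ∀ i, 0 < ∑ j, t i j := fun i => hpos i.succ
    have htot' : (∑ j, γ j) + (∑ i, ∑ j, t i j) = d := by
      rw [← htot, Fin.sum_univ_succ (f := fun i => ∑ j, β i j)]
      rfl
    have httot_pos : 0 < ∑ i, ∑ j, t i j :=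
      lt_of_lt_of_le (htpos 0)
        (Finset.single_le_sum (f := fun i => ∑ j, t i j) (fun i _ => Nat.zero_le _)
          (Finset.mem_univ (0 : Fin (r + 1))))
    have hγ0 : 0 < ∑ j, γ j := hpos 0
    have hγlt : (∑ j, γ j) < d := by omega
    have hsumβ : (∑ i, β i) = γ + ∑ i, t i := by
      rw [Fin.sum_univ_succ]
      rfl
    -- membership of p γ * T t
    have h1 : multisymPowerSum k N γ * T k N (r + 1) t ∈ A := by
      refine mul_mem (hA γ (hpos 0) hγlt) ?_
      refine T_mem k N (m := ∑ i, ∑ j, t i j) ?_ (r + 1) t le_rfl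
      intro δ hδ hδle
      exact hA δ hδ (by omega)
    -- the update facts
    have hupdsum : ∀ j : Fin (r + 1),
        (∑ i, Function.update t j (γ + t j) i) = γ + ∑ i, t i := by
      intro j
      rw [Finset.sum_update_of_mem (Finset.mem_univ j),
        ← Finset.add_sum_erase Finset.univ t (Finset.mem_univ j), add_assoc,
        Finset.sdiff_singleton_eq_erase]
    have hupdmem : ∀ j : Fin (r + 1),
        T k N (r + 1) (Function.update t j (γ + t j)) -
          ((-1 : ℝ) ^ r * ((r.factorial : ℕ) : ℝ)) • multisymPowerSum k N (∑ i, β i) ∈ A := by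
      intro j
      have hpos' : ∀ i, 0 < ∑ j', Function.update t j (γ + t j) i j' := by
        intro i
        rcases eq_or_ne i j with rfl | h
        · have h2 : (∑ j', Function.update t i (γ + t i) i j') =
              (∑ j', γ j') + ∑ j', t i j' := by
            simp [Finset.sum_add_distrib]
          have h3 := htpos i
          omega
        · simpa [Function.update_of_ne h] using htpos i
      have htot'' : (∑ i, ∑ j', Function.update t j (γ + t j) i j') = d := by
        rw [sum_update_sum]
        omega
      have := ih (Function.update t j (γ + t j)) hpos' htot''
      rwa [hupdsum j, ← hsumβ] at this
    -- the algebraic rearrangement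
    have hc : ((-1 : ℝ) ^ (r + 1) * (((r+1).factorial : ℕ) : ℝ)) =
        -((r + 1 : ℝ) * ((-1 : ℝ) ^ r * ((r.factorial : ℕ) : ℝ))) := by
      rw [pow_succ, Nat.factorial_succ]
      push_cast
      ring
    have hexp : T k N (r + 1 + 1) β -
        ((-1 : ℝ) ^ (r + 1) * (((r+1).factorial : ℕ) : ℝ)) • multisymPowerSum k N (∑ i, β i) =
        multisymPowerSum k N γ * T k N (r + 1) t -
          ∑ j : Fin (r + 1), (T k N (r + 1) (Function.update t j (γ + t j)) -
            ((-1 : ℝ) ^ r * ((r.factorial : ℕ) : ℝ)) • multisymPowerSum k N (∑ i, β i)) := by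
      rw [T_succ, Finset.sum_sub_distrib, Finset.sum_const, Finset.card_univ,
        Fintype.card_fin, hc, ← Nat.cast_smul_eq_nsmul ℝ (r + 1)
          (((-1 : ℝ) ^ r * ((r.factorial : ℕ) : ℝ)) • multisymPowerSum k N (∑ i, β i)), smul_smul, neg_smul]
      push_cast
      abel
    rw [hexp]
    exact sub_mem h1 (sum_mem fun j _ => hupdmem j)
theorem exists_decomp (k : ℕ) : ∀ (n : ℕ) (γ : Fin k → ℕ), n + 1 ≤ ∑ j, γ j →
    ∃ β : Fin (n + 1) → Fin k → ℕ, (∀ i, 0 < ∑ j, β i j) ∧ (∑ i, β i) = γ := by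
  intro n
  induction n with
  | zero =>
    intro γ h
    exact ⟨fun _ => γ, fun _ => h, Fin.sum_univ_one _⟩
  | succ n ih =>
    intro γ h
    classical
    have hex : ∃ j₀, 0 < γ j₀ := by
      by_contra hc
      push_neg at hc
      have : (∑ j, γ j) = 0 := Finset.sum_eq_zero fun j _ => Nat.le_zero.mp (hc j)
      omega
    obtain ⟨j₀, hj₀⟩ := hex
    set γ' := Function.update γ j₀ (γ j₀ - 1) with hγ'
    have hsum' : (∑ j, γ' j) = (∑ j, γ j) - 1 := by
      rw [hγ', Finset.sum_update_of_mem (Finset.mem_univ j₀),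
        Finset.sdiff_singleton_eq_erase,
        ← Finset.add_sum_erase Finset.univ γ (Finset.mem_univ j₀)]
      omega
    obtain ⟨β', hβ'pos, hβ'sum⟩ := ih γ' (by omega)
    refine ⟨Fin.cons (Pi.single j₀ 1) β', ?_, ?_⟩
    · intro i
      refine Fin.cases ?_ ?_ i
      · simpa using Finset.sum_pi_single' j₀ 1 Finset.univ ▸ (by
          rw [Fin.cons_zero]
          simp [Finset.sum_pi_single'])
      · intro i'
        simpa using hβ'pos i'
    · rw [Fin.sum_univ_succ]
      simp only [Fin.cons_zero, Fin.cons_succ]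
      rw [hβ'sum]
      funext j
      rcases eq_or_ne j j₀ with rfl | h
      · simp [hγ', Pi.single_apply]
        omega
      · simp [hγ', Pi.single_apply, h, Function.update_of_ne h]
noncomputable def Agen : Subalgebra ℝ (MvPolynomial (Fin N × Fin k) ℝ) :=
  Algebra.adjoin ℝ
    {P : MvPolynomial (Fin N × Fin k) ℝ |
      ∃ α : Fin k → ℕ, 1 ≤ (∑ j, α j) ∧ (∑ j, α j) ≤ N ∧ P = multisymPowerSum k N α}

theorem sum_pi_sum {r : ℕ} (β : Fin r → Fin k → ℕ) :
    (∑ j, (∑ i, β i) j) = ∑ i, ∑ j, β i j := by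
  rw [Finset.sum_comm]
  refine Finset.sum_congr rfl fun j _ => ?_
  rw [Finset.sum_apply]

theorem psum_mem_A : ∀ (d : ℕ) (γ : Fin k → ℕ), (∑ j, γ j) = d →
    multisymPowerSum k N γ ∈ Agen k N := by
  intro d
  induction d using Nat.strong_induction_on with
  | _ d ih =>
    intro γ hγ
    rcases Nat.lt_or_ge d 1 with h0 | h1
    · rw [psum_of_eq_zero k N (by omega)]
      exact (Agen k N).natCast_mem N
    rcases le_or_gt d N with hle | hgt
    · exact Algebra.subset_adjoin ⟨γ, by omega, by omega, rfl⟩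
    · obtain ⟨β, hpos, hsum⟩ := exists_decomp k N γ (by omega)
      have htot : (∑ i, ∑ j, β i j) = d := by
        rw [← sum_pi_sum, hsum, hγ]
      have hkey := T_key k N d (A := Agen k N)
        (fun δ _ h2 => ih _ (by omega) δ rfl) N β hpos htot
      rw [T_eq_zero_of_lt k N (Nat.lt_succ_self N) β, hsum, zero_sub] at hkey
      have hc : ((-1 : ℝ) ^ N * ((N.factorial : ℕ) : ℝ)) ≠ 0 :=
        mul_ne_zero (pow_ne_zero _ (by norm_num))
          (Nat.cast_ne_zero.mpr (Nat.factorial_ne_zero N))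
      have h2 := (Agen k N).smul_mem hkey (((-1 : ℝ) ^ N * ((N.factorial : ℕ) : ℝ))⁻¹)
      rw [smul_neg, smul_smul, inv_mul_cancel₀ hc, one_smul] at h2
      exact neg_mem_iff.mp h2

theorem perm_sum_mem (p : MvPolynomial (Fin N × Fin k) ℝ) :
    (∑ σ : Equiv.Perm (Fin N),
      MvPolynomial.rename (Equiv.prodCongr σ (Equiv.refl (Fin k))) p) ∈ Agen k N := by
  classical
  have hrw : (∑ σ : Equiv.Perm (Fin N),
      MvPolynomial.rename (Equiv.prodCongr σ (Equiv.refl (Fin k))) p) =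
      ∑ σ : Equiv.Perm (Fin N),
        MvPolynomial.rename (Equiv.prodCongr σ (Equiv.refl (Fin k)))
          (∑ v ∈ p.support, monomial v (coeff v p)) := by
    rw [← p.as_sum]
  rw [hrw, Finset.sum_congr rfl fun σ _ => map_sum _ _ _, Finset.sum_comm]
  refine sum_mem fun v _ => ?_
  have hmono : ∀ σ : Equiv.Perm (Fin N),
      MvPolynomial.rename (Equiv.prodCongr σ (Equiv.refl (Fin k)))
        (monomial v (coeff v p)) =
      C (coeff v p) * ∏ i : Fin N, xpow k N (σ i) (fun j => v (i, j)) := by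
    intro σ
    rw [monomial_eq, Finsupp.prod_fintype _ _ (fun a => pow_zero _), map_mul, rename_C,
      map_prod]
    congr 1
    rw [Fintype.prod_prod_type]
    refine Finset.prod_congr rfl fun i _ => Finset.prod_congr rfl fun j _ => ?_
    rw [map_pow, rename_X]
    rfl
  rw [Finset.sum_congr rfl fun σ _ => hmono σ, ← Finset.mul_sum]
  refine mul_mem ((Agen k N).algebraMap_mem _) ?_
  have hTB : (∑ σ : Equiv.Perm (Fin N), ∏ i : Fin N, xpow k N (σ i) (fun j => v (i, j))) =
      T k N N (fun i j => v (i, j)) := by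
    rw [T]
    refine Finset.sum_bij (i := fun σ _ => σ.toEmbedding) (fun _ _ => Finset.mem_univ _)
      ?_ ?_ ?_
    · intro σ1 _ σ2 _ h
      apply Equiv.coe_fn_injective
      have h2 := congrArg (fun e : Fin N ↪ Fin N => (e : Fin N → Fin N)) h
      simpa using h2
    · intro f _
      have hbij : Function.Bijective f := (Finite.injective_iff_bijective).mp f.inj'
      refine ⟨Equiv.ofBijective f hbij, Finset.mem_univ _, ?_⟩
      ext x
      rfl
    · intro σ _
      rfl
  rw [hTB]
  exact T_mem k N (m := ∑ i, ∑ j, v (i, j))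
    (fun δ _ hle => psum_mem_A k N _ δ rfl) N _ le_rfl

theorem rename_psum (σ : Equiv.Perm (Fin N)) (α : Fin k → ℕ) :
    MvPolynomial.rename (Equiv.prodCongr σ (Equiv.refl (Fin k)))
      (multisymPowerSum k N α) = multisymPowerSum k N α := by
  rw [multisymPowerSum, map_sum]
  have h : ∀ i : Fin N,
      MvPolynomial.rename (Equiv.prodCongr σ (Equiv.refl (Fin k)))
        (∏ j : Fin k, (X (i, j) : MvPolynomial (Fin N × Fin k) ℝ) ^ α j) =
      ∏ j : Fin k, (X (σ i, j) : MvPolynomial (Fin N × Fin k) ℝ) ^ α j := by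
    intro i
    rw [map_prod]
    refine Finset.prod_congr rfl fun j _ => ?_
    rw [map_pow, rename_X]
    rfl
  rw [Finset.sum_congr rfl fun i _ => h i]
  exact Fintype.sum_equiv σ _ _ fun i => rfl

theorem mem_invariant {p : MvPolynomial (Fin N × Fin k) ℝ} (hp : p ∈ Agen k N)
    (σ : Equiv.Perm (Fin N)) :
    MvPolynomial.rename (Equiv.prodCongr σ (Equiv.refl (Fin k))) p = p := by
  have hle : Agen k N ≤ AlgHom.equalizer
      (MvPolynomial.rename (R := ℝ) (Equiv.prodCongr σ (Equiv.refl (Fin k))) :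
        MvPolynomial (Fin N × Fin k) ℝ →ₐ[ℝ] MvPolynomial (Fin N × Fin k) ℝ)
      (AlgHom.id ℝ _) := by
    rw [Agen]
    refine Algebra.adjoin_le ?_
    rintro P ⟨α, _, _, rfl⟩
    exact rename_psum k N σ α
  exact hle hp

theorem invariant_mem {p : MvPolynomial (Fin N × Fin k) ℝ}
    (hp : ∀ σ : Equiv.Perm (Fin N),
      MvPolynomial.rename (Equiv.prodCongr σ (Equiv.refl (Fin k))) p = p) :
    p ∈ Agen k N := by
  have hfac : ((N.factorial : ℕ) : ℝ) ≠ 0 := Nat.cast_ne_zero.mpr (Nat.factorial_ne_zero N)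
  have hsum : (((N.factorial : ℕ) : ℝ)) • p =
      ∑ σ : Equiv.Perm (Fin N),
        MvPolynomial.rename (Equiv.prodCongr σ (Equiv.refl (Fin k))) p := by
    rw [Finset.sum_congr rfl fun σ _ => hp σ, Finset.sum_const, Finset.card_univ,
      Fintype.card_perm, Fintype.card_fin, Nat.cast_smul_eq_nsmul]
  have h1 : (((N.factorial : ℕ) : ℝ)) • p ∈ Agen k N := by
    rw [hsum]
    exact perm_sum_mem k N p
  have h2 := (Agen k N).smul_mem h1 ((((N.factorial : ℕ) : ℝ))⁻¹)
  rwa [smul_smul, inv_mul_cancel₀ hfac, one_smul] at h2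

end Briand

/-- Briand's theorem.  In `ℝ[x_{i,j} : i ∈ [N], j ∈ [k]]` with the
symmetric group `S_N` permuting the `N` families, the subalgebra of invariant
(multisymmetric) polynomials is generated as an `ℝ`-algebra by the elementary
multisymmetric power sums `p_α` with `1 ≤ |α| ≤ N`.  In particular, given an enumeration
`e` of all `α ∈ ℕ^k` with `|α| ≤ N` by `Fin (C(k+N,k))`, every multisymmetric polynomial
`p` can be written as `p = q(p_{α_1}, …, p_{α_t})` for some real polynomial `q` in
`t = C(k+N,k)` variables. -/
theorem multisymmetric_generated_by_power_sums
    (k N : ℕ)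
    (e : Fin ((k + N).choose k) ≃ {α : Fin k → ℕ // (∑ j, α j) ≤ N}) :
    (∀ p : MvPolynomial (Fin N × Fin k) ℝ,
      (∀ σ : Equiv.Perm (Fin N),
          MvPolynomial.rename (Equiv.prodCongr σ (Equiv.refl (Fin k))) p = p) ↔
        p ∈ Algebra.adjoin ℝ
          {P : MvPolynomial (Fin N × Fin k) ℝ |
            ∃ α : Fin k → ℕ, 1 ≤ (∑ j, α j) ∧ (∑ j, α j) ≤ N ∧
              P = multisymPowerSum k N α}) ∧
    (∀ p : MvPolynomial (Fin N × Fin k) ℝ,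
      (∀ σ : Equiv.Perm (Fin N),
          MvPolynomial.rename (Equiv.prodCongr σ (Equiv.refl (Fin k))) p = p) →
      ∃ q : MvPolynomial (Fin ((k + N).choose k)) ℝ,
        p = MvPolynomial.aeval
          (fun t : Fin ((k + N).choose k) => multisymPowerSum k N (e t : Fin k → ℕ)) q) := by
  constructor
  · intro p
    exact ⟨fun hp => Briand.invariant_mem k N hp, fun hp σ => Briand.mem_invariant k N hp σ⟩
  · intro p hp
    have hmem := Briand.invariant_mem k N hp
    have hle : Briand.Agen k N ≤ (MvPolynomial.aeval
        (fun t : Fin ((k + N).choose k) =>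
          multisymPowerSum k N (e t : Fin k → ℕ))).range := by
      refine Algebra.adjoin_le ?_
      rintro P ⟨α, h1, h2, rfl⟩
      refine ⟨MvPolynomial.X (e.symm ⟨α, h2⟩), ?_⟩
      show (MvPolynomial.aeval fun t => multisymPowerSum k N ((e t : Fin k → ℕ)))
        (MvPolynomial.X (e.symm ⟨α, h2⟩)) = multisymPowerSum k N α
      rw [MvPolynomial.aeval_X]
      simp
    obtain ⟨q, hq⟩ := hle hmem
    exact ⟨q, hq.symm⟩
end

section
/- Let (Ω, d) be a compact metric space with diameter d_max, let 1 ≤ p < ∞, δ > 0, δ_0 = (1/2)·(δ/2)^{1/p}, and let {y_1,...,y_a} be a δ_0-net of Ω (the centers of a cover of Ω by balls of radius δ_0). Choose b_0 > 0 such that e^{−b_0 δ_0} < δ_0^p/(d_max^p · a), and define h_j(x) = exp(−b_0 · d(x, B_{δ_0}(y_j))) for j ∈ [a] and h(x) = (h_1(x),...,h_a(x)), where d(x, B_{δ_0}(y_j)) is the distance from x to the ball of radius δ_0 around y_j. For a weighted point set S = {(x_i, w_i) : Σ w_i = 1}, define 𝐡(S) = Σ_i w_i · h(x_i)/‖h(x_i)‖_1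 ∈ ℝ^a, and for v ∈ ℝ^a with v ≠ 0 define g(v) = {(y_j, v_j/‖v‖_1) : j ∈ [a]}. Then for every weighted point set S over Ω with at most N points, W_p(g(𝐡(S)), S)^p ≤ Σ_i Σ_j w_i · (h_j(x_i)/‖h(x_i)‖_1) · d(x_i, y_j)^p < δ. -/
/-- A weighted point set: a finite indexed family of points together with weights. -/
structure WPS (Ω : Type*) where
  n : ℕ
  pts : Fin n → Ω
  w : Fin n → ℝ

namespace WPS

/-- The weights are nonnegative and sum to one. -/
def IsWeighted {Ω : Type*} (S : WPS Ω) : Prop :=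
  (∀ i, 0 ≤ S.w i) ∧ (∑ i, S.w i) = 1

/-- The `p`-Wasserstein distance between two weighted point sets: the infimum, over
nonnegative coupling matrices `T` with row sums the weights of `P` and column sums the
weights of `Q`, of `(∑ i j, T i j * d(P i, Q j)^p)^(1/p)`. -/
noncomputable def Wp {Ω : Type*} [MetricSpace Ω] (p : ℝ) (P Q : WPS Ω) : ℝ :=
  sInf { c : ℝ | ∃ T : Fin P.n → Fin Q.n → ℝ,
    (∀ i j, 0 ≤ T i j) ∧
    (∀ i, (∑ j, T i j) = P.w i) ∧
    (∀ j, (∑ i, T i j) = Q.w j) ∧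
    c = (∑ i, ∑ j, T i j * dist (P.pts i) (Q.pts j) ^ p) ^ (1 / p) }

end WPS


/-- the quantitative estimate inside the proof of Theorem 3.4.
Let `(Ω, d)` be a compact metric space with diameter `d_max`, `1 ≤ p < ∞`, `δ > 0`,
`δ₀ = (1/2)(δ/2)^{1/p}`, and let `y₁, …, y_a` be a `δ₀`-net of `Ω`.  Choose `b₀ > 0` with
`exp(−b₀δ₀) < δ₀^p/(d_max^p · a)`, set `h_j(x) = exp(−b₀ · d(x, B_{δ₀}(y_j)))`,
`𝐡(S) = ∑ i, wᵢ · h(xᵢ)/‖h(xᵢ)‖₁` and `g(v) = {(y_j, v_j/‖v‖₁)}`.  Then for every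
weighted point set `S` with at most `N` points,
`W_p(g(𝐡(S)), S)^p ≤ ∑ i j, wᵢ (h_j(xᵢ)/‖h(xᵢ)‖₁) d(xᵢ, y_j)^p < δ`. -/
theorem wps_sketch_encode_decode_estimate
    (Ω : Type*) [MetricSpace Ω] [CompactSpace Ω]
    (N : ℕ) (p : ℝ) (hp : 1 ≤ p) (δ : ℝ) (hδ : 0 < δ)
    (δ₀ : ℝ) (hδ₀ : δ₀ = (1/2) * (δ/2) ^ (1/p))
    (a : ℕ) (y : Fin a → Ω)
    (hnet : ∀ x : Ω, ∃ j, dist x (y j) < δ₀)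
    (b₀ : ℝ) (hb₀_pos : 0 < b₀)
    (hb₀ : Real.exp (-(b₀ * δ₀)) <
      δ₀ ^ p / ((Metric.diam (Set.univ : Set Ω)) ^ p * (a : ℝ)))
    (S : WPS Ω) (hS : S.IsWeighted) (hSN : S.n ≤ N) :
    let h : Ω → Fin a → ℝ :=
      fun x j => Real.exp (-(b₀ * Metric.infDist x (Metric.ball (y j) δ₀)))
    let v : Fin a → ℝ := ∑ i, S.w i • ((∑ j, |h (S.pts i) j|)⁻¹ • h (S.pts i))
    let gv : WPS Ω := ⟨a, y, fun j => v j / (∑ j', |v j'|)⟩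
    WPS.Wp p gv S ^ p ≤
      (∑ i, ∑ j, S.w i * (h (S.pts i) j / (∑ j', |h (S.pts i) j'|)) *
        dist (S.pts i) (y j) ^ p) ∧
    (∑ i, ∑ j, S.w i * (h (S.pts i) j / (∑ j', |h (S.pts i) j'|)) *
        dist (S.pts i) (y j) ^ p) < δ := by
  intro h v gv
  have hp0 : (0:ℝ) < p := lt_of_lt_of_le one_pos hp
  have hpne : p ≠ 0 := ne_of_gt hp0
  have hδ₀pos : 0 < δ₀ := by
    rw [hδ₀]; positivity
  -- S has at least one point
  have hSn : 0 < S.n := by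
    rcases Nat.eq_zero_or_pos S.n with h0 | h0
    · exfalso
      have h1 := hS.2
      haveI : IsEmpty (Fin S.n) := by rw [h0]; infer_instance
      rw [Finset.univ_eq_empty, Finset.sum_empty] at h1
      norm_num at h1
    · exact h0
  have ha : 0 < a := by
    obtain ⟨j, -⟩ := hnet (S.pts ⟨0, hSn⟩)
    exact j.pos
  have hane : (a : ℝ) ≠ 0 := Nat.cast_ne_zero.mpr ha.ne'
  -- basic facts about h
  have hxj : ∀ (x : Ω) (j : Fin a), 0 < h x j := fun x j => Real.exp_pos _
  have habs : ∀ (x : Ω) (j : Fin a), |h x j| = h x j := fun x j => abs_of_pos (hxj x j)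
  have hH1 : ∀ x : Ω, 1 ≤ ∑ j', |h x j'| := by
    intro x
    obtain ⟨j, hj⟩ := hnet x
    have hmem : x ∈ Metric.ball (y j) δ₀ := Metric.mem_ball.mpr hj
    have hinf : Metric.infDist x (Metric.ball (y j) δ₀) = 0 :=
      Metric.infDist_zero_of_mem hmem
    have h1 : h x j = 1 := by
      show Real.exp (-(b₀ * Metric.infDist x (Metric.ball (y j) δ₀))) = 1
      rw [hinf, mul_zero, neg_zero, Real.exp_zero]
    calc (1:ℝ) = |h x j| := by rw [habs, h1]
      _ ≤ ∑ j', |h x j'| :=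
        Finset.single_le_sum (f := fun j' => |h x j'|) (fun j' _ => abs_nonneg _)
          (Finset.mem_univ j)
  have hHpos : ∀ x : Ω, (0:ℝ) < ∑ j', |h x j'| := fun x => lt_of_lt_of_le one_pos (hH1 x)
  have hHne : ∀ x : Ω, (∑ j', |h x j'|) ≠ 0 := fun x => ne_of_gt (hHpos x)
  have hratio_sum : ∀ x : Ω, (∑ j, h x j / (∑ j', |h x j'|)) = 1 := by
    intro x
    rw [← Finset.sum_div]
    have : (∑ j, h x j) = ∑ j', |h x j'| := Finset.sum_congr rfl fun j _ => (habs x j).symm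
    rw [this, div_self (hHne x)]
  have hratio_nonneg : ∀ (x : Ω) (j : Fin a), 0 ≤ h x j / (∑ j', |h x j'|) :=
    fun x j => div_nonneg (hxj x j).le (hHpos x).le
  -- value of v
  have hvj : ∀ j, v j = ∑ i, S.w i * (h (S.pts i) j / (∑ j', |h (S.pts i) j'|)) := by
    intro j
    show (∑ i, S.w i • ((∑ j', |h (S.pts i) j'|)⁻¹ • h (S.pts i))) j = _
    rw [Finset.sum_apply]
    refine Finset.sum_congr rfl fun i _ => ?_
    simp only [Pi.smul_apply, smul_eq_mul, div_eq_mul_inv]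
    ring
  have hv_nonneg : ∀ j, 0 ≤ v j := by
    intro j
    rw [hvj]
    exact Finset.sum_nonneg fun i _ => mul_nonneg (hS.1 i) (hratio_nonneg _ j)
  have hvabs : (∑ j', |v j'|) = 1 := by
    have h1 : (∑ j', |v j'|) = ∑ j', v j' :=
      Finset.sum_congr rfl fun j _ => abs_of_nonneg (hv_nonneg j)
    rw [h1]
    calc (∑ j', v j')
        = ∑ j', ∑ i, S.w i * (h (S.pts i) j' / (∑ j'', |h (S.pts i) j''|)) :=
          Finset.sum_congr rfl fun j _ => hvj j
      _ = ∑ i, ∑ j', S.w i * (h (S.pts i) j' / (∑ j'', |h (S.pts i) j''|)) :=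
          Finset.sum_comm
      _ = ∑ i, S.w i * (∑ j', h (S.pts i) j' / (∑ j'', |h (S.pts i) j''|)) := by
          simp [Finset.mul_sum]
      _ = ∑ i, S.w i := Finset.sum_congr rfl fun i _ => by rw [hratio_sum, mul_one]
      _ = 1 := hS.2
  have hgw : ∀ j, gv.w j = v j := by
    intro j
    show v j / (∑ j', |v j'|) = v j
    rw [hvabs, div_one]
  -- diameter is positive
  have hdiam_nonneg : (0:ℝ) ≤ Metric.diam (Set.univ : Set Ω) := Metric.diam_nonneg
  have hdmax : 0 < Metric.diam (Set.univ : Set Ω) := by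
    rcases hdiam_nonneg.lt_or_eq with h' | h'
    · exact h'
    · exfalso
      rw [← h', Real.zero_rpow hpne, zero_mul, div_zero] at hb₀
      exact absurd hb₀ (not_lt.mpr (Real.exp_pos _).le)
  have hdmaxp : (0:ℝ) < Metric.diam (Set.univ : Set Ω) ^ p := Real.rpow_pos_of_pos hdmax p
  -- δ₀^p ≤ δ/4
  have hδ₀p : δ₀ ^ p ≤ δ / 4 := by
    have h2 : ((δ/2) ^ (1/p)) ^ p = δ/2 := by
      rw [one_div, Real.rpow_inv_rpow (by linarith) hpne]
    have h3 : ((1:ℝ)/2) ^ p ≤ 1/2 := by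
      calc ((1:ℝ)/2) ^ p ≤ ((1:ℝ)/2) ^ (1:ℝ) :=
            Real.rpow_le_rpow_of_exponent_ge (by norm_num) (by norm_num) hp
        _ = 1/2 := Real.rpow_one _
    have h4 : (0:ℝ) ≤ (δ/2) ^ (1/p) := Real.rpow_nonneg (by linarith) _
    calc δ₀ ^ p = ((1:ℝ)/2) ^ p * ((δ/2) ^ (1/p)) ^ p := by
          rw [hδ₀, Real.mul_rpow (by norm_num) h4]
      _ = ((1:ℝ)/2) ^ p * (δ/2) := by rw [h2]
      _ ≤ (1/2) * (δ/2) := by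
          apply mul_le_mul_of_nonneg_right h3 (by linarith)
      _ = δ/4 := by ring
  have hδ₀p_nonneg : (0:ℝ) ≤ δ₀ ^ p := Real.rpow_nonneg hδ₀pos.le p
  -- the per-point inner estimate
  have hinner : ∀ x : Ω,
      (∑ j, (h x j / (∑ j', |h x j'|)) * dist x (y j) ^ p) ≤ 3 * δ / 4 := by
    intro x
    have key : ∀ j : Fin a, (h x j / (∑ j', |h x j'|)) * dist x (y j) ^ p
        ≤ (h x j / (∑ j', |h x j'|)) * (δ/2) + δ₀ ^ p / a := by
      intro j
      have hterm_pos : (0:ℝ) ≤ δ₀ ^ p / a := by positivity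
      by_cases hcase : dist x (y j) ≤ 2 * δ₀
      · have hd : dist x (y j) ^ p ≤ δ/2 := by
          calc dist x (y j) ^ p ≤ (2*δ₀) ^ p :=
                Real.rpow_le_rpow dist_nonneg hcase hp0.le
            _ = ((δ/2) ^ (1/p)) ^ p := by rw [hδ₀]; ring_nf
            _ = δ/2 := by rw [one_div, Real.rpow_inv_rpow (by linarith) hpne]
        calc (h x j / (∑ j', |h x j'|)) * dist x (y j) ^ p
            ≤ (h x j / (∑ j', |h x j'|)) * (δ/2) :=
              mul_le_mul_of_nonneg_left hd (hratio_nonneg x j)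
          _ ≤ (h x j / (∑ j', |h x j'|)) * (δ/2) + δ₀ ^ p / a := le_add_of_nonneg_right hterm_pos
      · push_neg at hcase
        have hball : (Metric.ball (y j) δ₀).Nonempty := ⟨y j, Metric.mem_ball_self hδ₀pos⟩
        have hinf : δ₀ ≤ Metric.infDist x (Metric.ball (y j) δ₀) := by
          by_contra hlt
          push_neg at hlt
          obtain ⟨z, hz, hdz⟩ := (Metric.infDist_lt_iff hball).mp hlt
          have hz' : dist z (y j) < δ₀ := Metric.mem_ball.mp hz
          have := dist_triangle x z (y j)
          linarith
        have hh_le : h x j ≤ Real.exp (-(b₀ * δ₀)) := by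
          show Real.exp (-(b₀ * Metric.infDist x (Metric.ball (y j) δ₀))) ≤ _
          apply Real.exp_le_exp.mpr
          nlinarith
        have hratio_le : h x j / (∑ j', |h x j'|) ≤ Real.exp (-(b₀ * δ₀)) := by
          calc h x j / (∑ j', |h x j'|) ≤ h x j / 1 :=
                div_le_div_of_nonneg_left (hxj x j).le one_pos (hH1 x)
            _ = h x j := div_one _
            _ ≤ _ := hh_le
        have hd_le : dist x (y j) ^ p ≤ Metric.diam (Set.univ : Set Ω) ^ p := by
          apply Real.rpow_le_rpow dist_nonneg _ hp0.le
          exact Metric.dist_le_diam_of_mem (IsCompact.isBounded isCompact_univ)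
            (Set.mem_univ _) (Set.mem_univ _)
        have hbound : (h x j / (∑ j', |h x j'|)) * dist x (y j) ^ p ≤ δ₀ ^ p / a := by
          calc (h x j / (∑ j', |h x j'|)) * dist x (y j) ^ p
              ≤ (δ₀ ^ p / (Metric.diam (Set.univ : Set Ω) ^ p * a)) *
                  (Metric.diam (Set.univ : Set Ω) ^ p) := by
                apply mul_le_mul (le_of_lt (lt_of_le_of_lt hratio_le hb₀)) hd_le
                  (Real.rpow_nonneg dist_nonneg _)
                positivity
            _ = δ₀ ^ p / a := by
                field_simp
        calc (h x j / (∑ j', |h x j'|)) * dist x (y j) ^ p ≤ δ₀ ^ p / a := hbound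
          _ ≤ (h x j / (∑ j', |h x j'|)) * (δ/2) + δ₀ ^ p / a :=
              le_add_of_nonneg_left (mul_nonneg (hratio_nonneg x j) (by linarith))
    calc (∑ j, (h x j / (∑ j', |h x j'|)) * dist x (y j) ^ p)
        ≤ ∑ j, ((h x j / (∑ j', |h x j'|)) * (δ/2) + δ₀ ^ p / a) :=
          Finset.sum_le_sum fun j _ => key j
      _ = (∑ j, h x j / (∑ j', |h x j'|)) * (δ/2) + (a : ℝ) * (δ₀ ^ p / a) := by
          rw [Finset.sum_add_distrib, ← Finset.sum_mul, Finset.sum_const,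
            Finset.card_univ, Fintype.card_fin, nsmul_eq_mul]
      _ = δ/2 + δ₀ ^ p := by
          rw [hratio_sum, one_mul, mul_div_cancel₀ _ hane]
      _ ≤ δ/2 + δ/4 := by linarith
      _ = 3 * δ / 4 := by ring
  -- rewrite the target double sum
  have htarget_eq : (∑ i, ∑ j, S.w i * (h (S.pts i) j / (∑ j', |h (S.pts i) j'|)) *
        dist (S.pts i) (y j) ^ p)
      = ∑ i, S.w i * (∑ j, (h (S.pts i) j / (∑ j', |h (S.pts i) j'|)) *
        dist (S.pts i) (y j) ^ p) := by
    refine Finset.sum_congr rfl fun i _ => ?_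
    rw [Finset.mul_sum]
    exact Finset.sum_congr rfl fun j _ => by ring
  -- second part: < δ
  have hlt : (∑ i, ∑ j, S.w i * (h (S.pts i) j / (∑ j', |h (S.pts i) j'|)) *
        dist (S.pts i) (y j) ^ p) < δ := by
    rw [htarget_eq]
    calc (∑ i, S.w i * (∑ j, (h (S.pts i) j / (∑ j', |h (S.pts i) j'|)) *
          dist (S.pts i) (y j) ^ p))
        ≤ ∑ i, S.w i * (3 * δ / 4) :=
          Finset.sum_le_sum fun i _ =>
            mul_le_mul_of_nonneg_left (hinner (S.pts i)) (hS.1 i)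
      _ = 3 * δ / 4 := by rw [← Finset.sum_mul, hS.2, one_mul]
      _ < δ := by linarith
  -- first part: the Wasserstein bound
  have htarget_nonneg : (0:ℝ) ≤ ∑ i, ∑ j, S.w i *
      (h (S.pts i) j / (∑ j', |h (S.pts i) j'|)) * dist (S.pts i) (y j) ^ p := by
    refine Finset.sum_nonneg fun i _ => Finset.sum_nonneg fun j _ => ?_
    exact mul_nonneg (mul_nonneg (hS.1 i) (hratio_nonneg _ j)) (Real.rpow_nonneg dist_nonneg _)
  have hmem : ((∑ i, ∑ j, S.w i * (h (S.pts i) j / (∑ j', |h (S.pts i) j'|)) *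
        dist (S.pts i) (y j) ^ p) ^ (1/p)) ∈
      { c : ℝ | ∃ T : Fin gv.n → Fin S.n → ℝ,
        (∀ i j, 0 ≤ T i j) ∧
        (∀ i, (∑ j, T i j) = gv.w i) ∧
        (∀ j, (∑ i, T i j) = S.w j) ∧
        c = (∑ i, ∑ j, T i j * dist (gv.pts i) (S.pts j) ^ p) ^ (1 / p) } := by
    refine ⟨fun j i => S.w i * (h (S.pts i) j / (∑ j', |h (S.pts i) j'|)), ?_, ?_, ?_, ?_⟩
    · intro j i
      exact mul_nonneg (hS.1 i) (hratio_nonneg _ j)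
    · intro j
      rw [hgw j, hvj j]
    · intro i
      rw [← Finset.mul_sum, hratio_sum, mul_one]
    · congr 1
      rw [Finset.sum_comm]
      refine Finset.sum_congr rfl fun j _ => Finset.sum_congr rfl fun i _ => ?_
      show S.w i * (h (S.pts i) j / (∑ j', |h (S.pts i) j'|)) * dist (S.pts i) (y j) ^ p
        = S.w i * (h (S.pts i) j / (∑ j', |h (S.pts i) j'|)) * dist (y j) (S.pts i) ^ p
      rw [dist_comm]
  have hbdd : BddBelow { c : ℝ | ∃ T : Fin gv.n → Fin S.n → ℝ,
        (∀ i j, 0 ≤ T i j) ∧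
        (∀ i, (∑ j, T i j) = gv.w i) ∧
        (∀ j, (∑ i, T i j) = S.w j) ∧
        c = (∑ i, ∑ j, T i j * dist (gv.pts i) (S.pts j) ^ p) ^ (1 / p) } := by
    refine ⟨0, fun c hc => ?_⟩
    obtain ⟨T, hT1, -, -, hc⟩ := hc
    rw [hc]
    exact Real.rpow_nonneg (Finset.sum_nonneg fun i _ => Finset.sum_nonneg fun j _ =>
      mul_nonneg (hT1 i j) (Real.rpow_nonneg dist_nonneg _)) _
  have hWp_le : WPS.Wp p gv S ≤ (∑ i, ∑ j, S.w i *
      (h (S.pts i) j / (∑ j', |h (S.pts i) j'|)) * dist (S.pts i) (y j) ^ p) ^ (1/p) :=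
    csInf_le hbdd hmem
  have hWp_nonneg : 0 ≤ WPS.Wp p gv S := by
    refine le_csInf ⟨_, hmem⟩ fun c hc => ?_
    obtain ⟨T, hT1, -, -, hc⟩ := hc
    rw [hc]
    exact Real.rpow_nonneg (Finset.sum_nonneg fun i _ => Finset.sum_nonneg fun j _ =>
      mul_nonneg (hT1 i j) (Real.rpow_nonneg dist_nonneg _)) _
  refine ⟨?_, hlt⟩
  calc WPS.Wp p gv S ^ p
      ≤ ((∑ i, ∑ j, S.w i * (h (S.pts i) j / (∑ j', |h (S.pts i) j'|)) *
          dist (S.pts i) (y j) ^ p) ^ (1/p)) ^ p :=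
        Real.rpow_le_rpow hWp_nonneg hWp_le hp0.le
    _ = _ := by rw [one_div, Real.rpow_inv_rpow htarget_nonneg hpne]
end

section
/- Let (Ω, d) be a compact metric space with covering number ν_Ω(r) for each radius r, fix N ∈ ℕ and 1 ≤ p < ∞, and let X be the set of weighted point sets over Ω with at most N points, equipped with the p-Wasserstein metric W_p. Let f : X × X → ℝ be uniformly continuous (with respect to the sum metric W_p(A,A') + W_p(B,B')) and symmetric, i.e. f(A,B) = f(B,A). Then for every ε > 0 there exist δ > 0, a = a(δ) equal to the relevant covering number of Ω, a' = 4a + 1, and continuous functions h : Ω → ℝ^a, φ : ℝ^a → ℝ^{a'}, ρ : ℝ^{a'} → ℝ such that |f(A,B) − ρ(φ(Σ_{(x,w)∈A} w·h(x)) + φ(Σ_{(x,w)∈B} w·h(x)))| < ε for all A, B ∈ X. -/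
/-- The covering number `ν_Ω(r)`: the minimal number of balls of radius `r` needed to
cover `Ω`. -/
noncomputable def coveringNumber (Ω : Type*) [MetricSpace Ω] (r : ℝ) : ℕ :=
  sInf { a : ℕ | ∃ c : Fin a → Ω, ∀ x : Ω, ∃ i, dist x (c i) < r }

open Finset

theorem mul_div_max_eq_min {x y : ℝ} (hx : 0 ≤ x) (hy : 0 ≤ y) : x * y / max x y = min x y := by
  rcases (le_max_of_le_left hx : 0 ≤ max x y).eq_or_lt with h | h
  · obtain ⟨hx0, hy0⟩ := max_le_iff.mp h.symm.le
    simp [le_antisymm hx0 hx, le_antisymm hy0 hy]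
  · rw [← min_mul_max x y, mul_div_cancel_right₀ _ h.ne']

theorem mul_sum_div_sum_eq {ι : Type*} [Fintype ι] {l : ι → ℝ} (hl : ∀ i, 0 ≤ l i) (i : ι) :
    l i * (∑ j, l j) / ∑ j, l j = l i := by
  by_cases h : ∑ j, l j = 0
  · simp [(Finset.sum_eq_zero_iff_of_nonneg fun j _ => hl j).mp h i (mem_univ i)]
  · exact mul_div_cancel_right₀ _ h

theorem one_sub_sum_min_le_card_mul_dist {ι : Type*} [Fintype ι] {u v : ι → ℝ}
    (hu : ∑ i, u i = 1) : 1 - ∑ i, min (u i) (v i) ≤ Fintype.card ι * dist u v := by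
  rw [← hu, ← sum_sub_distrib]
  calc _ ≤ ∑ _i : ι, dist u v := sum_le_sum fun i _ => by
        have hi : u i - min (u i) (v i) ≤ |u i - v i| := by
          rcases le_total (u i) (v i) with hle | hle
          · simp [min_eq_left hle]
          · rw [min_eq_right hle, abs_of_nonneg (sub_nonneg.mpr hle)]
        simpa only [← Real.dist_eq] using hi.trans (dist_le_pi_dist u v i)
    _ = _ := by rw [sum_const, card_univ, nsmul_eq_mul]

theorem eq_and_eq_or_eq_and_eq_of_add_eq_of_sq_add_sq_eq {x y x' y' : ℝ} (hs : x + y = x' + y')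
    (hq : x ^ 2 + y ^ 2 = x' ^ 2 + y' ^ 2) : (x = x' ∧ y = y') ∨ (x = y' ∧ y = x') := by
  have : (x - x') * (x - y') = 0 := by linear_combination (x - y - x' - y') / 2 * hs + hq / 2
  rcases mul_eq_zero.mp this with h | h
  · exact .inl ⟨by linarith, by linarith⟩
  · exact .inr ⟨by linarith, by linarith⟩

/-- The polynomial with coefficients `u`, evaluated at `x`. -/
noncomputable def powerMoment (a : ℕ) (x : ℝ) : (Fin a → ℝ) →ₗ[ℝ] ℝ :=
  ∑ i : Fin a, x ^ (i : ℕ) • LinearMap.proj i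

theorem powerMoment_apply (a : ℕ) (x : ℝ) (u : Fin a → ℝ) :
    powerMoment a x u = ∑ i : Fin a, x ^ (i : ℕ) * u i := by
  simp [powerMoment]

theorem eq_of_powerMoment_eq {a : ℕ} {κ : Type*} {x : κ → ℝ} (hx : Function.Injective x)
    {S : Finset κ} (hS : a ≤ #S) {u v : Fin a → ℝ}
    (huv : ∀ k ∈ S, powerMoment a (x k) u = powerMoment a (x k) v) : u = v := by
  obtain ⟨S', hS'S, hcard⟩ := Finset.exists_subset_card_eq hS
  let node : Fin a → ℝ := fun j => x (S'.equivFin.symm (Fin.cast hcard.symm j))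
  have hnode : Function.Injective node :=
    hx.comp (Subtype.val_injective.comp ((S'.equivFin.symm.injective).comp (Fin.cast_injective _)))
  refine sub_eq_zero.mp (Matrix.eq_zero_of_forall_index_sum_pow_mul_eq_zero hnode fun j => ?_)
  have := huv _ (hS'S (S'.equivFin.symm (Fin.cast hcard.symm j)).2)
  rw [← sub_eq_zero, ← map_sub, powerMoment_apply] at this
  exact this

/-- The power moments of `u` at the nodes `0, …, 2a - 1` followed by their squares; the last
coordinate is not needed. -/
noncomputable def momentEncoding (a : ℕ) (u : Fin a → ℝ) : Fin (4 * a + 1) → ℝ := fun j =>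
  if (j : ℕ) < 2 * a then powerMoment a (j : ℕ) u else powerMoment a ((j : ℕ) - 2 * a) u ^ 2

theorem continuous_momentEncoding (a : ℕ) : Continuous (momentEncoding a) := by
  refine continuous_pi fun j => ?_
  unfold momentEncoding
  split_ifs
  · exact (powerMoment a _).continuous_of_finiteDimensional
  · exact (powerMoment a _).continuous_of_finiteDimensional.pow 2

theorem momentEncoding_add_eq_add {a : ℕ} {u v u' v' : Fin a → ℝ}
    (h : momentEncoding a u + momentEncoding a v = momentEncoding a u' + momentEncoding a v') :
    (u = u' ∧ v = v') ∨ (u = v' ∧ v = u') := by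
  classical
  let L : Fin (2 * a) → (Fin a → ℝ) → ℝ := fun k => powerMoment a (k : ℕ)
  have hL : Function.Injective fun k : Fin (2 * a) => ((k : ℕ) : ℝ) :=
    Nat.cast_injective.comp Fin.val_injective
  -- the coordinates `k` and `2a + k` give the sum and the sum of squares of `L k u, L k v`
  have hmatch : ∀ k, (L k u = L k u' ∧ L k v = L k v') ∨ (L k u = L k v' ∧ L k v = L k u') := by
    intro k
    have h₁ := congrFun h ⟨k, by omega⟩
    have h₂ := congrFun h ⟨2 * a + k, by omega⟩
    simp only [momentEncoding, Pi.add_apply, k.isLt, if_true] at h₁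
    simp only [momentEncoding, Pi.add_apply, show ¬(2 * a + (k : ℕ) < 2 * a) by omega, if_false,
      Nat.cast_add, Nat.cast_mul, Nat.cast_ofNat, add_sub_cancel_left] at h₂
    exact eq_and_eq_or_eq_and_eq_of_add_eq_of_sq_add_sq_eq h₁ h₂
  let S := univ.filter fun k => L k u = L k u' ∧ L k v = L k v'
  have hcard : #S + #Sᶜ = 2 * a := by rw [card_add_card_compl, Fintype.card_fin]
  -- one of the two matchings holds at `a` of the `2a` nodes
  by_cases hS : a ≤ #S
  · left
    exact ⟨eq_of_powerMoment_eq hL hS fun k hk => (mem_filter.mp hk).2.1,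
      eq_of_powerMoment_eq hL hS fun k hk => (mem_filter.mp hk).2.2⟩
  · right
    have hSc : a ≤ #Sᶜ := by omega
    have hswap : ∀ k ∈ Sᶜ, L k u = L k v' ∧ L k v = L k u' := fun k hk =>
      (hmatch k).resolve_left fun hk' => mem_compl.mp hk (mem_filter.mpr ⟨mem_univ k, hk'⟩)
    exact ⟨eq_of_powerMoment_eq hL hSc fun k hk => (hswap k hk).1,
      eq_of_powerMoment_eq hL hSc fun k hk => (hswap k hk).2⟩

theorem IsCompact.exists_pos_forall_lt_imp_mem {Z : Type*} [TopologicalSpace Z] {C U : Set Z}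
    (hC : IsCompact C) (hU : IsOpen U) {g : Z → ℝ} (hg : Continuous g)
    (hpos : ∀ z ∈ C, z ∉ U → 0 < g z) : ∃ θ > 0, ∀ z ∈ C, g z < θ → z ∈ U := by
  obtain ⟨θ, hθ, hθle⟩ := (hC.diff hU).exists_forall_le' hg.continuousOn
    fun z hz => hpos z hz.1 hz.2
  exact ⟨θ, hθ, fun z hz hgz => by_contra fun hzU => (hθle z ⟨hz, hzU⟩).not_gt hgz⟩

theorem IsCompact.exists_pos_dist_lt_imp_of_eq_or_eq_swap {E Y : Type*} [PseudoMetricSpace E]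
    [MetricSpace Y] {K : Set (E × E)} (hK : IsCompact K) {Φ : E × E → Y} (hΦ : Continuous Φ)
    (hinj : ∀ x ∈ K, ∀ y ∈ K, Φ x = Φ y → x = y ∨ x = y.swap) {ζ : ℝ} (hζ : 0 < ζ) :
    ∃ θ > 0, ∀ x ∈ K, ∀ y ∈ K, dist (Φ x) (Φ y) < θ → dist x y < ζ ∨ dist x y.swap < ζ := by
  set U : Set ((E × E) × (E × E)) := {q | dist q.1 q.2 < ζ} ∪ {q | dist q.1 q.2.swap < ζ}
  have hU : IsOpen U :=
    (isOpen_lt (by fun_prop) continuous_const).union (isOpen_lt (by fun_prop) continuous_const)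
  have hpos : ∀ q ∈ K ×ˢ K, q ∉ U → 0 < dist (Φ q.1) (Φ q.2) := fun q hq hqU =>
    dist_pos.mpr fun hΦq => hqU <| by
      rcases hinj q.1 hq.1 q.2 hq.2 hΦq with h | h
      · exact .inl (show dist q.1 q.2 < ζ by rw [h, dist_self]; exact hζ)
      · exact .inr (show dist q.1 q.2.swap < ζ by rw [h, dist_self]; exact hζ)
  obtain ⟨θ, hθ, hθU⟩ := (hK.prod hK).exists_pos_forall_lt_imp_mem hU (by fun_prop) hpos
  exact ⟨θ, hθ, fun x hx y hy hxy => hθU (x, y) ⟨hx, hy⟩ hxy⟩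

theorem TotallyBounded.exists_finset_forall_exists_dist_lt {ι E : Type*} [PseudoMetricSpace E]
    {π : ι → E} {S : Set ι} (hS : TotallyBounded (π '' S)) {e : ℝ} (he : 0 < e) :
    ∃ t : Finset ι, ↑t ⊆ S ∧ ∀ i ∈ S, ∃ j ∈ t, dist (π i) (π j) < e := by
  classical
  obtain ⟨t, htS, ht, hcov⟩ := Metric.finite_approx_of_totallyBounded hS e he
  obtain ⟨s, hsS, hs⟩ := Finset.subset_set_image_iff.mp (ht.coe_toFinset.trans_subset htS)
  refine ⟨s, hsS, fun i hi => ?_⟩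
  obtain ⟨y, hy, hiy⟩ := Set.mem_iUnion₂.mp (hcov ⟨i, hi, rfl⟩)
  obtain ⟨j, hj, rfl⟩ := Finset.mem_image.mp (hs ▸ ht.mem_toFinset.mpr hy)
  exact ⟨j, hj, hiy⟩

theorem exists_continuous_forall_abs_sub_le {ι E : Type*} [PseudoMetricSpace E] (π : ι → E)
    {S : Set ι} (hS : TotallyBounded (π '' S)) (F : ι → ℝ) {θ ε : ℝ} (hθ : 0 < θ)
    (hF : ∀ i ∈ S, ∀ j ∈ S, dist (π i) (π j) < θ → |F i - F j| ≤ ε) :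
    ∃ ρ : E → ℝ, Continuous ρ ∧ ∀ i ∈ S, |F i - ρ (π i)| ≤ ε := by
  classical
  obtain ⟨t, htS, hnet⟩ := hS.exists_finset_forall_exists_dist_lt (half_pos hθ)
  let w : ι → E → ℝ := fun j s => max (θ - dist s (π j)) 0
  have hw0 : ∀ j s, 0 ≤ w j s := fun j s => le_max_right _ _
  -- `ρ` is the `w`-weighted average of the values at the net; near the data the total weight
  -- exceeds `θ / 2`, so the cut-off in the denominator is invisible there
  refine ⟨fun s => (∑ j ∈ t, w j s * F j) / max (∑ j ∈ t, w j s) (θ / 2),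
    .div (by fun_prop) (by fun_prop) fun s => (lt_max_of_lt_right (half_pos hθ)).ne', ?_⟩
  intro i hi
  dsimp only
  obtain ⟨j₀, hj₀, hij₀⟩ := hnet i hi
  have hW : θ / 2 ≤ ∑ j ∈ t, w j (π i) :=
    (le_max_of_le_left (by linarith)).trans (single_le_sum (fun j _ => hw0 j _) hj₀)
  have hcenter : (∑ j ∈ t, w j (π i) * F j) / max (∑ j ∈ t, w j (π i)) (θ / 2)
      = t.centerMass (fun j => w j (π i)) F := by
    simp only [max_eq_left hW, Finset.centerMass, smul_eq_mul, inv_mul_eq_div]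
  rw [hcenter, ← Finset.centerMass_filter_ne_zero, abs_sub_comm, ← Real.dist_eq,
    ← Metric.mem_closedBall]
  refine (convex_closedBall (F i) ε).centerMass_mem (fun j _ => hw0 j _) ?_ fun j hj => ?_
  · rw [Finset.sum_filter_ne_zero]
    linarith
  · have hpos : 0 < w j (π i) := lt_of_le_of_ne (hw0 j _) (mem_filter.mp hj).2.symm
    have hdist : dist (π i) (π j) < θ := by
      by_contra hge
      exact hpos.ne' (max_eq_right (by linarith))
    rw [Metric.mem_closedBall, Real.dist_eq, abs_sub_comm]
    exact hF i hi j (htS (mem_filter.mp hj).1) hdist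

theorem exists_forall_dist_lt_coveringNumber (Ω : Type*) [MetricSpace Ω] [CompactSpace Ω]
    {r : ℝ} (hr : 0 < r) : ∃ c : Fin (coveringNumber Ω r) → Ω, ∀ x, ∃ i, dist x (c i) < r := by
  have hne : {a : ℕ | ∃ c : Fin a → Ω, ∀ x, ∃ i, dist x (c i) < r}.Nonempty := by
    obtain ⟨t, -, ht, hcov⟩ := finite_cover_balls_of_compact (isCompact_univ (X := Ω)) hr
    obtain ⟨n, c, -, rfl⟩ := ht.fin_param
    refine ⟨n, c, fun x => ?_⟩
    obtain ⟨_, ⟨i, rfl⟩, hx⟩ := Set.mem_iUnion₂.mp (hcov (Set.mem_univ x))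
    exact ⟨i, hx⟩
  exact Nat.sInf_mem hne

theorem exists_continuous_stdSimplex_subordinate {Ω ι : Type*} [PseudoMetricSpace Ω] [Fintype ι]
    {c : ι → Ω} {r : ℝ} (hc : ∀ x, ∃ i, dist x (c i) < r) :
    ∃ h : Ω → ι → ℝ, Continuous h ∧ (∀ x, h x ∈ stdSimplex ℝ ι) ∧
      ∀ x i, 0 < h x i → dist x (c i) < r := by
  let bump : Ω → ι → ℝ := fun x i => max (r - dist x (c i)) 0
  have hbump0 : ∀ x i, 0 ≤ bump x i := fun x i => le_max_right _ _
  have hbump_pos : ∀ x i, 0 < bump x i ↔ dist x (c i) < r := fun x i => by simp [bump]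
  have htotal : ∀ x, 0 < ∑ i, bump x i := fun x => by
    obtain ⟨i, hi⟩ := hc x
    exact ((hbump_pos x i).mpr hi).trans_le (single_le_sum (fun j _ => hbump0 x j) (mem_univ i))
  refine ⟨fun x i => bump x i / ∑ j, bump x j, ?_, fun x => ⟨fun i => ?_, ?_⟩, fun x i hi => ?_⟩
  · exact continuous_pi fun i => .div (by fun_prop) (by fun_prop) fun x => (htotal x).ne'
  · exact div_nonneg (hbump0 x i) (htotal x).le
  · rw [← sum_div, div_self (htotal x).ne']
  · exact (hbump_pos x i).mp ((div_pos_iff_of_pos_right (htotal x)).mp hi)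

theorem exists_coupling_ge_of_subcoupling {ι κ : Type*} [Fintype ι] [Fintype κ] {α : ι → ℝ}
    {β : κ → ℝ} (hαβ : ∑ i, α i = ∑ j, β j) {T : ι → κ → ℝ} (hrow : ∀ i, ∑ j, T i j ≤ α i)
    (hcol : ∀ j, ∑ i, T i j ≤ β j) :
    ∃ C : ι → κ → ℝ, (∀ i j, T i j ≤ C i j) ∧ (∀ i, ∑ j, C i j = α i) ∧
      ∀ j, ∑ i, C i j = β j := by
  set l : ι → ℝ := fun i => α i - ∑ j, T i j
  set l' : κ → ℝ := fun j => β j - ∑ i, T i j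
  have hl : ∀ i, 0 ≤ l i := fun i => sub_nonneg.mpr (hrow i)
  have hl' : ∀ j, 0 ≤ l' j := fun j => sub_nonneg.mpr (hcol j)
  have hmass : ∑ j, l' j = ∑ i, l i := by
    simp only [l, l', sum_sub_distrib, hαβ, sum_comm (γ := ι)]
  -- the missing row and column masses `l`, `l'` are coupled as a product
  refine ⟨fun i j => T i j + l i * l' j / ∑ i, l i, fun i j => ?_, fun i => ?_, fun j => ?_⟩
  · exact le_add_of_nonneg_right
      (div_nonneg (mul_nonneg (hl i) (hl' j)) (sum_nonneg fun i _ => hl i))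
  · rw [sum_add_distrib, ← sum_div, ← mul_sum, hmass, mul_sum_div_sum_eq hl]
    ring
  · rw [sum_add_distrib, ← sum_div, ← sum_mul, ← hmass, mul_comm, mul_sum_div_sum_eq hl']
    ring

namespace WPS

section Mean

variable {Ω ι : Type*}

def mean (h : Ω → ι → ℝ) (A : WPS Ω) : ι → ℝ := ∑ j, A.w j • h (A.pts j)

theorem mean_apply (h : Ω → ι → ℝ) (A : WPS Ω) (i : ι) :
    A.mean h i = ∑ j, A.w j * h (A.pts j) i := by
  simp [mean, Finset.sum_apply]

theorem mean_mem_stdSimplex [Fintype ι] {h : Ω → ι → ℝ} (hh : ∀ x, h x ∈ stdSimplex ℝ ι)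
    {A : WPS Ω} (hA : A.IsWeighted) : A.mean h ∈ stdSimplex ℝ ι :=
  (convex_stdSimplex ℝ ι).sum_mem (fun j _ => hA.1 j) hA.2 fun _ _ => hh _

end Mean

section PartitionCoupling

variable {Ω ι : Type*} [Fintype ι] {h : Ω → ι → ℝ} {A A' : WPS Ω}

/-- Inside each cell `i` of the partition of unity `h`, the parts of `A` and `A'` carried by
`h · i` are coupled proportionally; this transports the mass `min (A.mean h i) (A'.mean h i)`. -/
noncomputable def partitionCoupling (h : Ω → ι → ℝ) (A A' : WPS Ω) : Fin A.n → Fin A'.n → ℝ :=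
  fun j k => ∑ i, A.w j * h (A.pts j) i * (A'.w k * h (A'.pts k) i) / max (A.mean h i) (A'.mean h i)

theorem partitionCoupling_nonneg (hh : ∀ x, h x ∈ stdSimplex ℝ ι) (hA : A.IsWeighted)
    (hA' : A'.IsWeighted) (j : Fin A.n) (k : Fin A'.n) : 0 ≤ partitionCoupling h A A' j k :=
  sum_nonneg fun i _ => div_nonneg (mul_nonneg (mul_nonneg (hA.1 j) ((hh _).1 i))
    (mul_nonneg (hA'.1 k) ((hh _).1 i))) (le_max_of_le_left ((mean_mem_stdSimplex hh hA).1 i))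

theorem partitionCoupling_swap (j : Fin A.n) (k : Fin A'.n) :
    partitionCoupling h A' A k j = partitionCoupling h A A' j k := by
  simp only [partitionCoupling, mul_comm, max_comm]

theorem sum_partitionCoupling (j : Fin A.n) : ∑ k, partitionCoupling h A A' j k
    = ∑ i, A.w j * h (A.pts j) i * (A'.mean h i / max (A.mean h i) (A'.mean h i)) := by
  simp only [partitionCoupling, mean_apply]
  rw [sum_comm]
  refine sum_congr rfl fun i _ => ?_
  rw [sum_div, mul_sum]
  simp only [mul_div_assoc]

theorem sum_partitionCoupling_le (hh : ∀ x, h x ∈ stdSimplex ℝ ι) (hA : A.IsWeighted)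
    (j : Fin A.n) : ∑ k, partitionCoupling h A A' j k ≤ A.w j := by
  rw [sum_partitionCoupling]
  calc _ ≤ ∑ i, A.w j * h (A.pts j) i := sum_le_sum fun i _ =>
        mul_le_of_le_one_right (mul_nonneg (hA.1 j) ((hh _).1 i)) (div_le_one_of_le₀
          (le_max_right _ _) (le_max_of_le_left ((mean_mem_stdSimplex hh hA).1 i)))
    _ = A.w j := by rw [← mul_sum, (hh _).2, mul_one]

theorem sum_sum_partitionCoupling (hh : ∀ x, h x ∈ stdSimplex ℝ ι) (hA : A.IsWeighted)
    (hA' : A'.IsWeighted) :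
    ∑ j, ∑ k, partitionCoupling h A A' j k = ∑ i, min (A.mean h i) (A'.mean h i) := by
  simp only [sum_partitionCoupling]
  rw [sum_comm]
  refine sum_congr rfl fun i _ => ?_
  rw [← sum_mul, ← mean_apply, ← mul_div_assoc, mul_div_max_eq_min
    ((mean_mem_stdSimplex hh hA).1 i) ((mean_mem_stdSimplex hh hA').1 i)]

theorem exists_pos_of_partitionCoupling_pos (hh : ∀ x, h x ∈ stdSimplex ℝ ι) {j : Fin A.n}
    {k : Fin A'.n} (hjk : 0 < partitionCoupling h A A' j k) :
    ∃ i, 0 < h (A.pts j) i ∧ 0 < h (A'.pts k) i := by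
  by_contra! hnone
  refine hjk.not_ge (sum_nonpos fun i _ => ?_)
  rcases ((hh (A.pts j)).1 i).eq_or_lt with h0 | h0
  · simp [← h0]
  · simp [le_antisymm (hnone i h0) ((hh _).1 i)]

end PartitionCoupling

section Transport

variable {Ω : Type*} [MetricSpace Ω]

theorem Wp_le_of_coupling (p : ℝ) {P Q : WPS Ω} {T : Fin P.n → Fin Q.n → ℝ}
    (hT0 : ∀ i j, 0 ≤ T i j) (hrow : ∀ i, ∑ j, T i j = P.w i) (hcol : ∀ j, ∑ i, T i j = Q.w j) :
    Wp p P Q ≤ (∑ i, ∑ j, T i j * dist (P.pts i) (Q.pts j) ^ p) ^ (1 / p) := by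
  refine csInf_le ⟨0, ?_⟩ ⟨T, hT0, hrow, hcol, rfl⟩
  rintro _ ⟨T', hT', -, -, rfl⟩
  exact Real.rpow_nonneg (sum_nonneg fun i _ => sum_nonneg fun j _ =>
    mul_nonneg (hT' i j) (Real.rpow_nonneg dist_nonneg p)) _

theorem Wp_le_of_subcoupling {p : ℝ} (hp : 0 ≤ p) {P Q : WPS Ω} (hP : P.IsWeighted)
    (hQ : Q.IsWeighted) {B : ℝ} (hB : ∀ i j, dist (P.pts i) (Q.pts j) ^ p ≤ B)
    {T : Fin P.n → Fin Q.n → ℝ} (hT0 : ∀ i j, 0 ≤ T i j) (hrow : ∀ i, ∑ j, T i j ≤ P.w i)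
    (hcol : ∀ j, ∑ i, T i j ≤ Q.w j) :
    Wp p P Q ≤ (∑ i, ∑ j, T i j * dist (P.pts i) (Q.pts j) ^ p
      + (1 - ∑ i, ∑ j, T i j) * B) ^ (1 / p) := by
  obtain ⟨C, hTC, hrowC, hcolC⟩ :=
    exists_coupling_ge_of_subcoupling (hP.2.trans hQ.2.symm) hrow hcol
  have hC0 : ∀ i j, 0 ≤ C i j := fun i j => (hT0 i j).trans (hTC i j)
  have hmassC : ∑ i, ∑ j, C i j = 1 := by simp only [hrowC, hP.2]
  have hcost : ∑ i, ∑ j, C i j * dist (P.pts i) (Q.pts j) ^ p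
      ≤ ∑ i, ∑ j, T i j * dist (P.pts i) (Q.pts j) ^ p + (1 - ∑ i, ∑ j, T i j) * B :=
    calc ∑ i, ∑ j, C i j * dist (P.pts i) (Q.pts j) ^ p
        = ∑ i, ∑ j, T i j * dist (P.pts i) (Q.pts j) ^ p
          + ∑ i, ∑ j, (C i j - T i j) * dist (P.pts i) (Q.pts j) ^ p := by
          simp only [← sum_add_distrib, sub_mul, add_sub_cancel]
      _ ≤ ∑ i, ∑ j, T i j * dist (P.pts i) (Q.pts j) ^ p + ∑ i, ∑ j, (C i j - T i j) * B := by
          gcongr with i _ j _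
          exacts [sub_nonneg.mpr (hTC i j), hB i j]
      _ = _ := by simp only [← sum_mul, sum_sub_distrib, hmassC]
  exact (Wp_le_of_coupling p hC0 hrowC hcolC).trans (Real.rpow_le_rpow (sum_nonneg fun i _ =>
    sum_nonneg fun j _ => mul_nonneg (hC0 i j) (Real.rpow_nonneg dist_nonneg p)) hcost
    (by positivity))

end Transport

variable {Ω ι : Type*} [MetricSpace Ω] [BoundedSpace Ω] [Fintype ι] {h : Ω → ι → ℝ} {c : ι → Ω}
  {r : ℝ}

theorem Wp_le_of_subordinate {p : ℝ} (hp : 0 ≤ p) (hh : ∀ x, h x ∈ stdSimplex ℝ ι) (hr : 0 ≤ r)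
    (hsupp : ∀ x i, 0 < h x i → dist x (c i) < r) {A A' : WPS Ω} (hA : A.IsWeighted)
    (hA' : A'.IsWeighted) :
    Wp p A A' ≤ ((2 * r) ^ p + Fintype.card ι * dist (A.mean h) (A'.mean h)
      * Metric.diam (Set.univ : Set Ω) ^ p) ^ (1 / p) := by
  set T := partitionCoupling h A A'
  have hT0 := partitionCoupling_nonneg hh hA hA'
  have hmass : ∑ j, ∑ k, T j k ≤ 1 := by
    rw [sum_sum_partitionCoupling hh hA hA', ← (mean_mem_stdSimplex hh hA).2]
    exact sum_le_sum fun i _ => min_le_left _ _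
  have hdefect : 1 - ∑ j, ∑ k, T j k ≤ Fintype.card ι * dist (A.mean h) (A'.mean h) := by
    rw [sum_sum_partitionCoupling hh hA hA']
    exact one_sub_sum_min_le_card_mul_dist (mean_mem_stdSimplex hh hA).2
  -- the coupling only moves mass between points of a common ball of radius `r`
  have hcost : ∑ j, ∑ k, T j k * dist (A.pts j) (A'.pts k) ^ p ≤ (2 * r) ^ p * ∑ j, ∑ k, T j k := by
    rw [mul_sum]
    refine sum_le_sum fun j _ => ?_
    rw [mul_sum]
    refine sum_le_sum fun k _ => ?_
    rw [mul_comm ((2 * r) ^ p)]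
    rcases (hT0 j k).eq_or_lt with h0 | h0
    · simp [T, ← h0]
    obtain ⟨i, hji, hki⟩ := exists_pos_of_partitionCoupling_pos hh h0
    have hd : dist (A.pts j) (A'.pts k) ≤ 2 * r := by
      linarith [dist_triangle_right (A.pts j) (A'.pts k) (c i), hsupp _ _ hji, hsupp _ _ hki]
    exact mul_le_mul_of_nonneg_left (Real.rpow_le_rpow dist_nonneg hd hp) (hT0 j k)
  have h2r : 0 ≤ (2 * r) ^ p := Real.rpow_nonneg (by linarith) p
  have hDp : 0 ≤ Metric.diam (Set.univ : Set Ω) ^ p := Real.rpow_nonneg Metric.diam_nonneg p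
  refine (Wp_le_of_subcoupling hp hA hA' (fun j k => Real.rpow_le_rpow dist_nonneg
    (Metric.dist_le_diam_of_mem BoundedSpace.bounded_univ trivial trivial) hp) hT0
    (sum_partitionCoupling_le hh hA) fun k => ?_).trans (Real.rpow_le_rpow ?_ ?_ (by positivity))
  · simpa only [partitionCoupling_swap] using sum_partitionCoupling_le (A' := A) hh hA' k
  · exact add_nonneg (sum_nonneg fun j _ => sum_nonneg fun k _ => mul_nonneg (hT0 j k)
      (Real.rpow_nonneg dist_nonneg p)) (mul_nonneg (sub_nonneg.mpr hmass) hDp)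
  · exact add_le_add (hcost.trans (mul_le_of_le_one_right h2r hmass))
      (mul_le_mul_of_nonneg_right hdefect hDp)

theorem exists_pos_forall_dist_mean_lt_imp_Wp_lt {p : ℝ} (hp : 0 < p)
    (hh : ∀ x, h x ∈ stdSimplex ℝ ι) (hr : 0 ≤ r) (hsupp : ∀ x i, 0 < h x i → dist x (c i) < r)
    {η : ℝ} (hη : 2 * r < η) : ∃ ζ > 0, ∀ A A' : WPS Ω, A.IsWeighted → A'.IsWeighted →
      dist (A.mean h) (A'.mean h) < ζ → Wp p A A' < η := by
  set g : ℝ → ℝ := fun t =>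
    ((2 * r) ^ p + Fintype.card ι * t * Metric.diam (Set.univ : Set Ω) ^ p) ^ (1 / p)
  have hg : ContinuousAt g 0 :=
    ((Real.continuous_rpow_const (by positivity)).comp (by fun_prop)).continuousAt
  have hg0 : g 0 = 2 * r := by
    simp only [g, mul_zero, zero_mul, add_zero, one_div]
    exact Real.rpow_rpow_inv (by linarith) hp.ne'
  obtain ⟨ζ, hζ, hgζ⟩ := Metric.eventually_nhds_iff.mp
    (hg.eventually_lt continuousAt_const (hg0 ▸ hη))
  refine ⟨ζ, hζ, fun A A' hA hA' hAA' => (Wp_le_of_subordinate hp.le hh hr hsupp hA hA').trans_lt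
    (hgζ ?_)⟩
  rwa [Real.dist_eq, sub_zero, abs_of_nonneg dist_nonneg]

end WPS

theorem exists_continuous_abs_sub_momentEncoding_le {α : Type*} {a : ℕ} {K : Set (Fin a → ℝ)}
    (hK : IsCompact K) {X : Set α} {m : α → Fin a → ℝ} (hm : ∀ A ∈ X, m A ∈ K) {f : α → α → ℝ}
    (hf_symm : ∀ A ∈ X, ∀ B ∈ X, f A B = f B A) {ε ζ : ℝ} (hζ : 0 < ζ)
    (hf : ∀ A ∈ X, ∀ A' ∈ X, ∀ B ∈ X, ∀ B' ∈ X,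
      dist (m A) (m A') < ζ → dist (m B) (m B') < ζ → |f A B - f A' B'| ≤ ε) :
    ∃ ρ : (Fin (4 * a + 1) → ℝ) → ℝ, Continuous ρ ∧ ∀ A ∈ X, ∀ B ∈ X,
      |f A B - ρ (momentEncoding a (m A) + momentEncoding a (m B))| ≤ ε := by
  set Φ : (Fin a → ℝ) × (Fin a → ℝ) → (Fin (4 * a + 1) → ℝ) :=
    fun u => momentEncoding a u.1 + momentEncoding a u.2
  have hΦ : Continuous Φ := by have := continuous_momentEncoding a; fun_prop
  obtain ⟨θ, hθ, hΦθ⟩ := (hK.prod hK).exists_pos_dist_lt_imp_of_eq_or_eq_swap hΦ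
    (fun x _ y _ hxy => (momentEncoding_add_eq_add hxy).imp (fun h => Prod.ext h.1 h.2)
      fun h => Prod.ext h.1 h.2) hζ
  have hmK : ∀ q ∈ X ×ˢ X, (m q.1, m q.2) ∈ K ×ˢ K := fun q hq => ⟨hm _ hq.1, hm _ hq.2⟩
  have hS : TotallyBounded ((fun q : α × α => Φ (m q.1, m q.2)) '' X ×ˢ X) :=
    ((hK.prod hK).image hΦ).totallyBounded.subset (by
      rintro _ ⟨q, hq, rfl⟩
      exact ⟨_, hmK q hq, rfl⟩)
  obtain ⟨ρ, hρ, hρf⟩ := exists_continuous_forall_abs_sub_le _ hS (fun q => f q.1 q.2) hθ (by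
    rintro ⟨A, B⟩ ⟨hA, hB⟩ ⟨A', B'⟩ ⟨hA', hB'⟩ hπ
    rcases hΦθ _ (hmK _ ⟨hA, hB⟩) _ (hmK _ ⟨hA', hB'⟩) hπ with hd | hd <;>
      rw [Prod.dist_eq, max_lt_iff] at hd
    · exact hf A hA A' hA' B hB B' hB' hd.1 hd.2
    · rw [hf_symm A' hA' B' hB']
      exact hf A hA B' hB' B hB A' hA' hd.1 hd.2)
  exact ⟨ρ, hρ, fun A hA B hB => hρf (A, B) ⟨hA, hB⟩⟩

/-- Corollary 3.5 of the paper.  Let `(Ω, d)` be a compact metric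
space, `N ∈ ℕ`, `1 ≤ p < ∞`, and let `X` be the weighted point sets over `Ω` with at most
`N` points, with the `p`-Wasserstein metric.  If `f : X × X → ℝ` is uniformly continuous
(w.r.t. the sum metric `W_p(A,A') + W_p(B,B')`) and symmetric, then for every `ε > 0`
there are `δ > 0`, `a = ν_Ω((1/2)(δ/2)^{1/p})`, `a' = 4a + 1` and continuous maps
`h : Ω → ℝ^a`, `φ : ℝ^a → ℝ^{a'}`, `ρ : ℝ^{a'} → ℝ` such that
`|f(A,B) − ρ(φ(∑_{(x,w)∈A} w·h(x)) + φ(∑_{(x,w)∈B} w·h(x)))| < ε` for all `A, B ∈ X`. -/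
theorem wasserstein_product_net_universality
    (Ω : Type*) [MetricSpace Ω] [CompactSpace Ω]
    (N : ℕ) (p : ℝ) (hp : 1 ≤ p)
    (f : WPS Ω → WPS Ω → ℝ)
    (hf_unif : ∀ ε : ℝ, 0 < ε → ∃ η : ℝ, 0 < η ∧ ∀ A A' B B' : WPS Ω,
      A.IsWeighted → A.n ≤ N → A'.IsWeighted → A'.n ≤ N →
      B.IsWeighted → B.n ≤ N → B'.IsWeighted → B'.n ≤ N →
      WPS.Wp p A A' + WPS.Wp p B B' < η → |f A B - f A' B'| < ε)
    (hf_symm : ∀ A B : WPS Ω, A.IsWeighted → A.n ≤ N → B.IsWeighted → B.n ≤ N →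
      f A B = f B A)
    (ε : ℝ) (hε : 0 < ε) :
    ∃ δ : ℝ, 0 < δ ∧
      ∃ (h : Ω → (Fin (coveringNumber Ω ((1/2) * (δ/2) ^ (1/p))) → ℝ))
        (φ : (Fin (coveringNumber Ω ((1/2) * (δ/2) ^ (1/p))) → ℝ) →
             (Fin (4 * coveringNumber Ω ((1/2) * (δ/2) ^ (1/p)) + 1) → ℝ))
        (ρ : (Fin (4 * coveringNumber Ω ((1/2) * (δ/2) ^ (1/p)) + 1) → ℝ) → ℝ),
        Continuous h ∧ Continuous φ ∧ Continuous ρ ∧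
        ∀ A B : WPS Ω, A.IsWeighted → A.n ≤ N → B.IsWeighted → B.n ≤ N →
          |f A B -
            ρ (φ (∑ i, A.w i • h (A.pts i)) + φ (∑ i, B.w i • h (B.pts i)))| < ε := by
  have hp0 : 0 < p := by linarith
  obtain ⟨η, hη, hf_near⟩ := hf_unif (ε / 2) (half_pos hε)
  set δ := (η / 2) ^ p
  have hδ : 0 < δ := Real.rpow_pos_of_pos (half_pos hη) p
  refine ⟨δ, hδ, ?_⟩
  set r := (1 / 2) * (δ / 2) ^ (1 / p)
  have hr : 0 < r := mul_pos one_half_pos (Real.rpow_pos_of_pos (half_pos hδ) _)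
  have h2r : 2 * r < η / 2 :=
    calc 2 * r = (δ / 2) ^ (1 / p) := by ring
      _ < δ ^ (1 / p) := Real.rpow_lt_rpow (half_pos hδ).le (half_lt_self hδ) (by positivity)
      _ = η / 2 := by rw [one_div]; exact Real.rpow_rpow_inv (half_pos hη).le hp0.ne'
  obtain ⟨c, hc⟩ := exists_forall_dist_lt_coveringNumber Ω hr
  obtain ⟨h, hh_cont, hh, hsupp⟩ := exists_continuous_stdSimplex_subordinate hc
  obtain ⟨ζ, hζ, hWp⟩ := WPS.exists_pos_forall_dist_mean_lt_imp_Wp_lt hp0 hh hr.le hsupp h2r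
  obtain ⟨ρ, hρ, hρf⟩ := exists_continuous_abs_sub_momentEncoding_le (isCompact_stdSimplex _ _)
    (X := {A | A.IsWeighted ∧ A.n ≤ N}) (fun A hA => WPS.mean_mem_stdSimplex hh hA.1)
    (fun A hA B hB => hf_symm A B hA.1 hA.2 hB.1 hB.2) hζ
    fun A hA A' hA' B hB B' hB' hAA' hBB' => (hf_near A A' B B' hA.1 hA.2 hA'.1 hA'.2 hB.1 hB.2
      hB'.1 hB'.2 (by linarith [hWp A A' hA.1 hA'.1 hAA', hWp B B' hB.1 hB'.1 hBB'])).le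
  exact ⟨h, _, ρ, hh_cont, continuous_momentEncoding _, hρ, fun A B hA hAn hB hBn =>
    (hρf A ⟨hA, hAn⟩ B ⟨hB, hBn⟩).trans_lt (half_lt_self hε)⟩
end

section
/- Let X ⊆ ℝ^d be compact, N ∈ ℕ, 1 ≤ p < ∞, and let 𝒳 be the set of weighted point sets over X with at most N points. For S ∈ 𝒳 with points {(x_i, w_i)}_{i∈[n]}, let S̃ be the padded point set listing the points of S followed by N − n copies of the pair (x_1, 0) (allowing zero weights). Define β : 𝒳 × 𝒳 → ℝ^{(d+1) × 2N} by stacking, as columns, the N padded (point, weight) pairs of the first argument followed by the N padded pairs of the second. Then for every ε > 0 there exists a continuous function f : Image(β) → ℝ such that |W_p(S_1, S_2) − f(β(S_1, S_2))| < ε for every (S_1, S_2) ∈ 𝒳 × 𝒳. -/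
/-- Padding a weighted point set to exactly `N` (point, weight) pairs: the points of `S`
are listed first, followed by `N − n` copies of the pair `(x₁, 0)` (junk if `S` is
empty). -/
noncomputable def WPS.pad {d : ℕ} (N : ℕ) (S : WPS (EuclideanSpace ℝ (Fin d)))
    (j : Fin N) : EuclideanSpace ℝ (Fin d) × ℝ :=
  if h : (j : ℕ) < S.n then (S.pts ⟨j, h⟩, S.w ⟨j, h⟩)
  else if h0 : 0 < S.n then (S.pts ⟨0, h0⟩, 0) else (0, 0)

/-- The map `β` stacking, as columns of a `(d+1) × 2N` real matrix, the `N` padded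
(point, weight) pairs of the first point set followed by those of the second; each column
is a point of `ℝ^d` together with its weight in the last coordinate. -/
noncomputable def WPS.beta {d : ℕ} (N : ℕ)
    (S₁ S₂ : WPS (EuclideanSpace ℝ (Fin d))) :
    Matrix (Fin (d + 1)) (Fin (2 * N)) ℝ :=
  fun r c =>
    let col : EuclideanSpace ℝ (Fin d) × ℝ :=
      if h : (c : ℕ) < N then WPS.pad N S₁ ⟨c, h⟩
      else WPS.pad N S₂ ⟨(c : ℕ) - N, by have := c.isLt; omega⟩
    if hr : (r : ℕ) < d then col.1 ⟨r, hr⟩ else col.2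

/-- Membership in the space `𝒳` of weighted point sets over `K` with at most `N`
points. -/
def WPS.MemX {d : ℕ} (K : Set (EuclideanSpace ℝ (Fin d))) (N : ℕ)
    (S : WPS (EuclideanSpace ℝ (Fin d))) : Prop :=
  S.IsWeighted ∧ S.n ≤ N ∧ ∀ i, S.pts i ∈ K

/-!
Padding only adds points of mass zero, which every coupling leaves untouched, so
`W_p(S₁, S₂)` is the `W_p` distance of the two padded point sets; these are read off from
`β(S₁, S₂)` linearly, and `f` can be taken exact: `f(β(S₁, S₂)) = W_p(S₁, S₂)`. What has to be
shown is that `W_p` of `N`-point sets is continuous in the points and the weights. Since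
`W_p^p` is the optimal transport cost, this follows once every coupling of weights `(a, b)`
can be moved to a coupling of `(a', b')` at ℓ¹-cost `O(‖a - a'‖₁ + ‖b - b'‖₁)`.
-/

open Finset Function

lemma exists_mem_Icc_mul_eq_min {x y : ℝ} (hx : 0 ≤ x) (hy : 0 ≤ y) :
    ∃ θ ∈ Set.Icc (0 : ℝ) 1, x * θ = min x y := by
  rcases hx.eq_or_lt with rfl | hx
  · exact ⟨0, ⟨le_rfl, zero_le_one⟩, by simp [hy]⟩
  · exact ⟨min x y / x, ⟨by positivity, div_le_one_of_le₀ (min_le_left x y) hx.le⟩,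
      mul_div_cancel₀ _ hx.ne'⟩

lemma sub_min_le_abs_sub (x y : ℝ) : x - min x y ≤ |y - x| :=
  (sub_le_sub_right (le_max_left x y) _).trans (max_sub_min_eq_abs x y).le

section Coupling

variable {ι κ : Type*} [Fintype ι] [Fintype κ]

def IsCoupling (a : ι → ℝ) (b : κ → ℝ) (T : ι → κ → ℝ) : Prop :=
  0 ≤ T ∧ (∀ i, ∑ j, T i j = a i) ∧ ∀ j, ∑ i, T i j = b j

variable {a a' : ι → ℝ} {b b' : κ → ℝ} {A C C' T T' : ι → κ → ℝ}

lemma isCoupling_mul (ha : a ∈ stdSimplex ℝ ι) (hb : b ∈ stdSimplex ℝ κ) :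
    IsCoupling a b fun i j => a i * b j :=
  ⟨fun i j => mul_nonneg (ha.1 i) (hb.1 j), fun i => by rw [← mul_sum, hb.2, mul_one],
    fun j => by rw [← sum_mul, ha.2, one_mul]⟩

namespace IsCoupling

lemma sum_sum_eq (hT : IsCoupling a b T) : ∑ i, ∑ j, T i j = ∑ i, a i :=
  sum_congr rfl fun i _ => hT.2.1 i

lemma sum_eq_sum (hT : IsCoupling a b T) : ∑ i, a i = ∑ j, b j := by
  simp only [← hT.2.1, ← hT.2.2]
  exact sum_comm

lemma nonneg_left (hT : IsCoupling a b T) : 0 ≤ a :=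
  fun i => hT.2.1 i ▸ sum_nonneg fun j _ => hT.1 i j

lemma nonneg_right (hT : IsCoupling a b T) : 0 ≤ b :=
  fun j => hT.2.2 j ▸ sum_nonneg fun i _ => hT.1 i j

lemma eq_zero_of_left_eq_zero (hT : IsCoupling a b T) {i : ι} (hi : a i = 0) (j : κ) :
    T i j = 0 :=
  (sum_eq_zero_iff_of_nonneg fun j _ => hT.1 i j).1 ((hT.2.1 i).trans hi) j (mem_univ j)

lemma eq_zero_of_right_eq_zero (hT : IsCoupling a b T) {j : κ} (hj : b j = 0) (i : ι) :
    T i j = 0 :=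
  (sum_eq_zero_iff_of_nonneg fun i _ => hT.1 i j).1 ((hT.2.2 j).trans hj) i (mem_univ i)

end IsCoupling

/-- The completion adds to `A` the product of its row and column deficits, normalised by their
common total. -/
lemma exists_isCoupling_ge (hA : 0 ≤ A) (hrow : ∀ i, ∑ j, A i j ≤ a i)
    (hcol : ∀ j, ∑ i, A i j ≤ b j) (hab : ∑ i, a i = ∑ j, b j) :
    ∃ T, IsCoupling a b T ∧ A ≤ T := by
  set r : ι → ℝ := fun i => a i - ∑ j, A i j
  set s : κ → ℝ := fun j => b j - ∑ i, A i j
  set m : ℝ := ∑ i, r i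
  have hr : ∀ i, 0 ≤ r i := fun i => sub_nonneg.2 (hrow i)
  have hs : ∀ j, 0 ≤ s j := fun j => sub_nonneg.2 (hcol j)
  have hsm : ∑ j, s j = m := by
    simp only [s, m, r, sum_sub_distrib, hab, sum_comm (f := fun i j => A i j)]
  have hdiv : ∀ x, (m = 0 → x = 0) → x * m / m = x := fun x hx => by
    rcases eq_or_ne m 0 with h | h
    · simp [hx h]
    · exact mul_div_cancel_right₀ x h
  have hrs : ∀ i j, 0 ≤ r i * s j / m := fun i j =>
    div_nonneg (mul_nonneg (hr i) (hs j)) (sum_nonneg fun i _ => hr i)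
  refine ⟨fun i j => A i j + r i * s j / m, ⟨fun i j => add_nonneg (hA i j) (hrs i j),
    fun i => ?_, fun j => ?_⟩, fun i j => le_add_of_nonneg_right (hrs i j)⟩
  · rw [sum_add_distrib, ← sum_div, ← mul_sum, hsm,
      hdiv _ fun h => (sum_eq_zero_iff_of_nonneg fun i _ => hr i).1 h i (mem_univ i)]
    simp [r]
  · rw [sum_add_distrib, ← sum_div, ← sum_mul, mul_comm]
    change ∑ i, A i j + s j * m / m = b j
    rw [hdiv _ fun h => (sum_eq_zero_iff_of_nonneg fun j _ => hs j).1 (hsm.trans h) j (mem_univ j)]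
    simp [s]

/-- Scale row `i` of `T` by `min (a i) (a' i) / a i` and column `j` by `min (b j) (b' j) / b j`;
the result fits under the new marginals, has lost at most the total variation of the marginals,
and is completed by `exists_isCoupling_ge`. -/
lemma IsCoupling.exists_isCoupling_sum_abs_sub_le (hT : IsCoupling a b T) (ha' : 0 ≤ a')
    (hb' : 0 ≤ b') (hsa : ∑ i, a' i = ∑ i, a i) (hsb : ∑ j, b' j = ∑ j, b j) :
    ∃ T', IsCoupling a' b' T' ∧
      ∑ i, ∑ j, |T' i j - T i j| ≤ 2 * (∑ i, |a' i - a i| + ∑ j, |b' j - b j|) := by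
  choose α hα haα using fun i => exists_mem_Icc_mul_eq_min (hT.nonneg_left i) (ha' i)
  choose β hβ hbβ using fun j => exists_mem_Icc_mul_eq_min (hT.nonneg_right j) (hb' j)
  set A : ι → κ → ℝ := fun i j => T i j * (α i * β j)
  have hA : 0 ≤ A := fun i j => mul_nonneg (hT.1 i j) (mul_nonneg (hα i).1 (hβ j).1)
  have hAT : A ≤ T := fun i j =>
    mul_le_of_le_one_right (hT.1 i j) (mul_le_one₀ (hα i).2 (hβ j).1 (hβ j).2)
  have hrow : ∀ i, ∑ j, A i j ≤ a' i := fun i => calc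
    ∑ j, A i j ≤ ∑ j, T i j * α i := sum_le_sum fun j _ =>
        mul_le_mul_of_nonneg_left (mul_le_of_le_one_right (hα i).1 (hβ j).2) (hT.1 i j)
    _ = min (a i) (a' i) := by rw [← sum_mul, hT.2.1, haα]
    _ ≤ a' i := min_le_right _ _
  have hcol : ∀ j, ∑ i, A i j ≤ b' j := fun j => calc
    ∑ i, A i j ≤ ∑ i, T i j * β j := sum_le_sum fun i _ =>
        mul_le_mul_of_nonneg_left (mul_le_of_le_one_left (hβ j).1 (hα i).2) (hT.1 i j)
    _ = min (b j) (b' j) := by rw [← sum_mul, hT.2.2, hbβ]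
    _ ≤ b' j := min_le_right _ _
  obtain ⟨T', hT', hAT'⟩ := exists_isCoupling_ge hA hrow hcol (by rw [hsa, hsb, hT.sum_eq_sum])
  have hloss : ∑ i, a i - ∑ i, ∑ j, A i j ≤ ∑ i, |a' i - a i| + ∑ j, |b' j - b j| := calc
    ∑ i, a i - ∑ i, ∑ j, A i j = ∑ i, ∑ j, T i j * (1 - α i * β j) := by
        simp only [← hT.2.1, ← sum_sub_distrib, A, mul_sub, mul_one]
    _ ≤ ∑ i, ∑ j, (T i j * (1 - α i) + T i j * (1 - β j)) := by
        refine sum_le_sum fun i _ => sum_le_sum fun j _ => ?_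
        rw [← mul_add]
        exact mul_le_mul_of_nonneg_left
          (by nlinarith [(hα i).1, (hα i).2, (hβ j).1, (hβ j).2]) (hT.1 i j)
    _ = ∑ i, (a i - min (a i) (a' i)) + ∑ j, (b j - min (b j) (b' j)) := by
        rw [sum_congr rfl fun i _ => sum_add_distrib, sum_add_distrib]
        congr 1
        · exact sum_congr rfl fun i _ => by rw [← sum_mul, hT.2.1, mul_sub, mul_one, haα]
        · rw [sum_comm]
          exact sum_congr rfl fun j _ => by rw [← sum_mul, hT.2.2, mul_sub, mul_one, hbβ]
    _ ≤ ∑ i, |a' i - a i| + ∑ j, |b' j - b j| := by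
        gcongr <;> exact sub_min_le_abs_sub _ _
  refine ⟨T', hT', ?_⟩
  calc ∑ i, ∑ j, |T' i j - T i j| ≤ ∑ i, ∑ j, ((T' i j - A i j) + (T i j - A i j)) := by
        gcongr with i _ j _
        exact abs_le.2 ⟨by linarith [hAT' i j], by linarith [hAT i j]⟩
    _ = (∑ i, a' i - ∑ i, ∑ j, A i j) + (∑ i, a i - ∑ i, ∑ j, A i j) := by
        simp only [sum_add_distrib, sum_sub_distrib, hT'.2.1, hT.2.1]
    _ ≤ _ := by rw [hsa]; linarith

def couplingCosts (C : ι → κ → ℝ) (a : ι → ℝ) (b : κ → ℝ) : Set ℝ :=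
  (fun T => ∑ i, ∑ j, T i j * C i j) '' {T | IsCoupling a b T}

noncomputable def transportCost (C : ι → κ → ℝ) (a : ι → ℝ) (b : κ → ℝ) : ℝ :=
  sInf (couplingCosts C a b)

lemma couplingCosts_nonneg (hC : 0 ≤ C) (a : ι → ℝ) (b : κ → ℝ) :
    ∀ c ∈ couplingCosts C a b, 0 ≤ c := by
  rintro _ ⟨T, hT, rfl⟩
  exact sum_nonneg fun i _ => sum_nonneg fun j _ => mul_nonneg (hT.1 i j) (hC i j)

lemma abs_sum_mul_sub_sum_mul_le {η B : ℝ} (hT' : 0 ≤ T') (hC : 0 ≤ C)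
    (hη : ∀ i j, |C' i j - C i j| ≤ η) (hB : ∀ i j, C i j ≤ B) :
    |∑ i, ∑ j, T' i j * C' i j - ∑ i, ∑ j, T i j * C i j| ≤
      η * ∑ i, ∑ j, T' i j + B * ∑ i, ∑ j, |T' i j - T i j| := calc
  _ = |∑ i, ∑ j, (T' i j * (C' i j - C i j) + (T' i j - T i j) * C i j)| := by
      simp only [← sum_sub_distrib]
      congr 1
      exact sum_congr rfl fun i _ => sum_congr rfl fun j _ => by ring
  _ ≤ ∑ i, ∑ j, |T' i j * (C' i j - C i j) + (T' i j - T i j) * C i j| :=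
      (abs_sum_le_sum_abs _ _).trans (sum_le_sum fun i _ => abs_sum_le_sum_abs _ _)
  _ ≤ ∑ i, ∑ j, (T' i j * η + |T' i j - T i j| * B) := by
      refine sum_le_sum fun i _ => sum_le_sum fun j _ => (abs_add_le _ _).trans ?_
      rw [abs_mul, abs_mul, abs_of_nonneg (hT' i j), abs_of_nonneg (hC i j)]
      gcongr
      exacts [hT' i j, hη i j, hB i j]
  _ = _ := by simp only [sum_add_distrib, ← sum_mul]; ring

lemma transportCost_le_of_forall_exists {δ : ℝ} (hne : ∃ T, IsCoupling a b T) (hC' : 0 ≤ C')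
    (h : ∀ T, IsCoupling a b T → ∃ T', IsCoupling a' b' T' ∧
      ∑ i, ∑ j, T' i j * C' i j ≤ ∑ i, ∑ j, T i j * C i j + δ) :
    transportCost C' a' b' ≤ transportCost C a b + δ := by
  rw [← sub_le_iff_le_add]
  refine le_csInf (hne.elim fun T hT => ⟨_, T, hT, rfl⟩) ?_
  rintro _ ⟨T, hT, rfl⟩
  obtain ⟨T', hT', hcost⟩ := h T hT
  rw [sub_le_iff_le_add]
  exact (csInf_le ⟨0, couplingCosts_nonneg hC' a' b'⟩ ⟨T', hT', rfl⟩).trans hcost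

lemma abs_transportCost_sub_le (hC : 0 ≤ C) (hC' : 0 ≤ C') (ha : a ∈ stdSimplex ℝ ι)
    (hb : b ∈ stdSimplex ℝ κ) (ha' : a' ∈ stdSimplex ℝ ι) (hb' : b' ∈ stdSimplex ℝ κ) :
    |transportCost C' a' b' - transportCost C a b| ≤
      dist C' C + 2 * ‖C‖ * (∑ i, |a' i - a i| + ∑ j, |b' j - b j|) := by
  have hη : ∀ i j, |C' i j - C i j| ≤ dist C' C := fun i j => by
    rw [← Real.dist_eq]
    exact (dist_le_pi_dist _ _ j).trans (dist_le_pi_dist _ _ i)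
  have hB : ∀ i j, C i j ≤ ‖C‖ := fun i j =>
    (Real.le_norm_self _).trans ((norm_le_pi_norm (C i) j).trans (norm_le_pi_norm C i))
  have hcost : ∀ {T T'}, IsCoupling a b T → IsCoupling a' b' T' →
      ∑ i, ∑ j, |T' i j - T i j| ≤ 2 * (∑ i, |a' i - a i| + ∑ j, |b' j - b j|) →
      |∑ i, ∑ j, T' i j * C' i j - ∑ i, ∑ j, T i j * C i j| ≤
        dist C' C + 2 * ‖C‖ * (∑ i, |a' i - a i| + ∑ j, |b' j - b j|) := fun hT hT' hTT' => by
    refine (abs_sum_mul_sub_sum_mul_le hT'.1 hC hη hB).trans ?_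
    rw [hT'.sum_sum_eq, ha'.2, mul_one, mul_comm 2 ‖C‖, mul_assoc]
    gcongr
  rw [abs_sub_le_iff, sub_le_iff_le_add', sub_le_iff_le_add']
  constructor
  · refine transportCost_le_of_forall_exists ⟨_, isCoupling_mul ha hb⟩ hC' fun T hT => ?_
    obtain ⟨T', hT', hTT'⟩ := hT.exists_isCoupling_sum_abs_sub_le ha'.1 hb'.1
      (ha'.2.trans ha.2.symm) (hb'.2.trans hb.2.symm)
    exact ⟨T', hT', by linarith [(abs_le.1 (hcost hT hT' hTT')).2]⟩
  · refine transportCost_le_of_forall_exists ⟨_, isCoupling_mul ha' hb'⟩ hC fun T' hT' => ?_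
    obtain ⟨T, hT, hTT'⟩ := hT'.exists_isCoupling_sum_abs_sub_le ha.1 hb.1
      (ha.2.trans ha'.2.symm) (hb.2.trans hb'.2.symm)
    have hcost' := hcost hT hT' (by simpa only [abs_sub_comm] using hTT')
    exact ⟨T, hT, by linarith [(abs_le.1 hcost').1]⟩

theorem ContinuousOn.transportCost {X : Type*} [TopologicalSpace X] {s : Set X}
    {C : X → ι → κ → ℝ} {a : X → ι → ℝ} {b : X → κ → ℝ}
    (hC : ContinuousOn C s) (ha : ContinuousOn a s) (hb : ContinuousOn b s)
    (hC0 : ∀ t ∈ s, 0 ≤ C t) (has : ∀ t ∈ s, a t ∈ stdSimplex ℝ ι)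
    (hbs : ∀ t ∈ s, b t ∈ stdSimplex ℝ κ) :
    ContinuousOn (fun t => transportCost (C t) (a t) (b t)) s := by
  intro t₀ ht₀
  rw [ContinuousWithinAt, tendsto_iff_dist_tendsto_zero]
  set g : X → ℝ := fun t => dist (C t) (C t₀) +
    2 * ‖C t₀‖ * (∑ i, |a t i - a t₀ i| + ∑ j, |b t j - b t₀ j|)
  have hg : ContinuousOn g s := by fun_prop
  refine squeeze_zero' (Filter.Eventually.of_forall fun _ => dist_nonneg)
    (eventually_nhdsWithin_of_forall fun t ht => ?_) (by simpa [g] using (hg t₀ ht₀).tendsto)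
  exact abs_transportCost_sub_le (hC0 t₀ ht₀) (hC0 t ht) (has t₀ ht₀) (hbs t₀ ht₀)
    (has t ht) (hbs t ht)

section Embedding

variable {ι' κ' : Type*} [Fintype ι'] [Fintype κ'] {e : ι → ι'} {f : κ → κ'}

lemma sum_sum_comp_of_injective (he : Injective e) (hf : Injective f) {G : ι' → κ' → ℝ}
    (hrow : ∀ i ∉ Set.range e, ∀ j, G i j = 0) (hcol : ∀ j ∉ Set.range f, ∀ i, G i j = 0) :
    ∑ i, ∑ j, G (e i) (f j) = ∑ i, ∑ j, G i j :=
  Fintype.sum_of_injective e he _ _ (fun i hi => by simp [hrow i hi]) fun i =>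
    Fintype.sum_of_injective f hf _ _ (fun j hj => hcol j hj _) fun _ => rfl

lemma isCoupling_comp_iff (he : Injective e) (hf : Injective f) {a : ι' → ℝ} {b : κ' → ℝ}
    {E : ι' → κ' → ℝ} (ha : ∀ i ∉ Set.range e, a i = 0) (hb : ∀ j ∉ Set.range f, b j = 0)
    (hrow : ∀ i ∉ Set.range e, ∀ j, E i j = 0) (hcol : ∀ j ∉ Set.range f, ∀ i, E i j = 0) :
    IsCoupling (a ∘ e) (b ∘ f) (fun i j => E (e i) (f j)) ↔ IsCoupling a b E := by
  have hsum_col : ∀ i, ∑ j, E i (f j) = ∑ j, E i j := fun i =>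
    Fintype.sum_of_injective f hf _ _ (fun j hj => hcol j hj i) fun _ => rfl
  have hsum_row : ∀ j, ∑ i, E (e i) j = ∑ i, E i j := fun j =>
    Fintype.sum_of_injective e he _ _ (fun i hi => hrow i hi j) fun _ => rfl
  refine ⟨fun ⟨h0, hr, hc⟩ => ⟨fun i j => ?_, fun i => ?_, fun j => ?_⟩,
    fun ⟨h0, hr, hc⟩ => ⟨fun i j => h0 _ _, fun i => ?_, fun j => ?_⟩⟩
  · by_cases hi : i ∈ Set.range e
    · by_cases hj : j ∈ Set.range f
      · obtain ⟨i, rfl⟩ := hi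
        obtain ⟨j, rfl⟩ := hj
        exact h0 i j
      · exact (hcol j hj i).ge
    · exact (hrow i hi j).ge
  · by_cases hi : i ∈ Set.range e
    · obtain ⟨i, rfl⟩ := hi
      exact (hsum_col _).symm.trans (hr i)
    · simp [hrow i hi, ha i hi]
  · by_cases hj : j ∈ Set.range f
    · obtain ⟨j, rfl⟩ := hj
      exact (hsum_row _).symm.trans (hc j)
    · simp [hcol j hj, hb j hj]
  · exact (hsum_col _).trans (hr _)
  · exact (hsum_row _).trans (hc _)

lemma transportCost_comp_of_injective (he : Injective e) (hf : Injective f) (C : ι' → κ' → ℝ)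
    {a : ι' → ℝ} {b : κ' → ℝ} (ha : ∀ i ∉ Set.range e, a i = 0)
    (hb : ∀ j ∉ Set.range f, b j = 0) :
    transportCost (fun i j => C (e i) (f j)) (a ∘ e) (b ∘ f) = transportCost C a b := by
  unfold transportCost couplingCosts
  congr 1
  ext c
  constructor
  · rintro ⟨T, hT, rfl⟩
    set E : ι' → κ' → ℝ := fun i => extend e (fun i => extend f (T i) 0) 0 i
    have hE : (fun i j => E (e i) (f j)) = T := by simp [E, he.extend_apply, hf.extend_apply]
    have hrow : ∀ i ∉ Set.range e, ∀ j, E i j = 0 := fun i hi j => by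
      simp [E, extend_apply' _ _ _ hi]
    have hcol : ∀ j ∉ Set.range f, ∀ i, E i j = 0 := fun j hj i => by
      by_cases hi : i ∈ Set.range e
      · obtain ⟨i, rfl⟩ := hi
        simp [E, he.extend_apply, extend_apply' _ _ _ hj]
      · exact hrow i hi j
    refine ⟨E, (isCoupling_comp_iff he hf ha hb hrow hcol).1 (hE ▸ hT), ?_⟩
    rw [← hE]
    exact (sum_sum_comp_of_injective he hf (G := fun i j => E i j * C i j)
      (fun i hi j => by simp [hrow i hi j]) fun j hj i => by simp [hcol j hj i]).symm
  · rintro ⟨T, hT, rfl⟩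
    have hrow : ∀ i ∉ Set.range e, ∀ j, T i j = 0 := fun i hi =>
      hT.eq_zero_of_left_eq_zero (ha i hi)
    have hcol : ∀ j ∉ Set.range f, ∀ i, T i j = 0 := fun j hj =>
      hT.eq_zero_of_right_eq_zero (hb j hj)
    exact ⟨_, (isCoupling_comp_iff he hf ha hb hrow hcol).2 hT,
      sum_sum_comp_of_injective he hf (G := fun i j => T i j * C i j)
        (fun i hi j => by simp [hrow i hi j]) fun j hj i => by simp [hcol j hj i]⟩

end Embedding

end Coupling

namespace WPS

variable {Ω : Type*} [MetricSpace Ω] {p : ℝ}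

lemma Wp_eq_transportCost_rpow (hp : 0 < p) (P Q : WPS Ω) :
    Wp p P Q = transportCost (fun i j => dist (P.pts i) (Q.pts j) ^ p) P.w Q.w ^ (1 / p) := by
  set A := couplingCosts (fun i j => dist (P.pts i) (Q.pts j) ^ p) P.w Q.w
  have hA : ∀ c ∈ A, 0 ≤ c := couplingCosts_nonneg (fun i j => Real.rpow_nonneg dist_nonneg p) _ _
  have hset : {c | ∃ T : Fin P.n → Fin Q.n → ℝ, (∀ i j, 0 ≤ T i j) ∧ (∀ i, ∑ j, T i j = P.w i) ∧
      (∀ j, ∑ i, T i j = Q.w j) ∧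
      c = (∑ i, ∑ j, T i j * dist (P.pts i) (Q.pts j) ^ p) ^ (1 / p)} = (· ^ (1 / p)) '' A := by
    ext c
    simp only [A, couplingCosts, Set.image_image, Set.mem_image, Set.mem_ofPred_eq, IsCoupling]
    exact ⟨fun ⟨T, h0, hr, hc, hcT⟩ => ⟨T, ⟨h0, hr, hc⟩, hcT.symm⟩,
      fun ⟨T, ⟨h0, hr, hc⟩, hcT⟩ => ⟨T, h0, hr, hc, hcT.symm⟩⟩
  rw [Wp, hset, transportCost]
  change sInf ((· ^ (1 / p)) '' A) = sInf A ^ (1 / p)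
  rcases A.eq_empty_or_nonempty with hempty | hne
  · rw [hempty, Set.image_empty, Real.sInf_empty, Real.zero_rpow (one_div_pos.2 hp).ne']
  · exact (MonotoneOn.map_csInf_of_continuousWithinAt
      (Real.continuousAt_rpow_const _ _ (Or.inr (by positivity))).continuousWithinAt
      (fun x hx y _ hxy => Real.rpow_le_rpow (hA x hx) hxy (by positivity)) hne ⟨0, hA⟩).symm

theorem continuousOn_Wp_mk {X : Type*} [TopologicalSpace X] {s : Set X} {n m : ℕ}
    {x : X → Fin n → Ω} {a : X → Fin n → ℝ} {y : X → Fin m → Ω} {b : X → Fin m → ℝ}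
    (hp : 0 < p) (hx : ContinuousOn x s) (ha : ContinuousOn a s) (hy : ContinuousOn y s)
    (hb : ContinuousOn b s) (has : ∀ t ∈ s, a t ∈ stdSimplex ℝ (Fin n))
    (hbs : ∀ t ∈ s, b t ∈ stdSimplex ℝ (Fin m)) :
    ContinuousOn (fun t => Wp p ⟨n, x t, a t⟩ ⟨m, y t, b t⟩) s := by
  simp only [Wp_eq_transportCost_rpow hp]
  have hC : ContinuousOn (fun t i j => dist (x t i) (y t j) ^ p) s :=
    continuousOn_pi.2 fun i => continuousOn_pi.2 fun j =>
      ContinuousOn.rpow_const (by fun_prop) fun _ _ => Or.inr hp.le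
  exact (hC.transportCost ha hb (fun t _ i j => Real.rpow_nonneg dist_nonneg p) has hbs).rpow_const
    fun _ _ => Or.inr (by positivity)

variable {d : ℕ}

noncomputable def padded (N : ℕ) (S : WPS (EuclideanSpace ℝ (Fin d))) :
    WPS (EuclideanSpace ℝ (Fin d)) :=
  ⟨N, fun j => (S.pad N j).1, fun j => (S.pad N j).2⟩

variable {N : ℕ} {S : WPS (EuclideanSpace ℝ (Fin d))}

lemma pad_of_lt {j : Fin N} (h : (j : ℕ) < S.n) : S.pad N j = (S.pts ⟨j, h⟩, S.w ⟨j, h⟩) :=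
  dif_pos h

lemma snd_pad_of_le {j : Fin N} (h : S.n ≤ j) : (S.pad N j).2 = 0 := by
  unfold pad
  rw [dif_neg h.not_gt]
  split_ifs <;> rfl

lemma pad_castLE (h : S.n ≤ N) (i : Fin S.n) : S.pad N (Fin.castLE h i) = (S.pts i, S.w i) :=
  pad_of_lt i.isLt

lemma padded_w_eq_zero (h : S.n ≤ N) : ∀ j ∉ Set.range (Fin.castLE h), (S.padded N).w j = 0 :=
  fun j hj => snd_pad_of_le (not_lt.1 fun hlt => hj ⟨⟨j, hlt⟩, rfl⟩)

lemma IsWeighted.padded (hS : S.IsWeighted) (h : S.n ≤ N) : (S.padded N).IsWeighted := by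
  refine ⟨fun (j : Fin N) => ?_, ?_⟩
  · rcases lt_or_ge (j : ℕ) S.n with hj | hj
    · change 0 ≤ (S.pad N j).2
      rw [pad_of_lt hj]
      exact hS.1 _
    · exact (snd_pad_of_le hj).ge
  · rw [← hS.2]
    exact (Fintype.sum_of_injective _ (Fin.castLE_injective h) _ _ (padded_w_eq_zero h)
      fun i => (congrArg Prod.snd (pad_castLE h i)).symm).symm

lemma Wp_padded (hp : 0 < p) {S₁ S₂ : WPS (EuclideanSpace ℝ (Fin d))}
    (h₁ : S₁.n ≤ N) (h₂ : S₂.n ≤ N) : Wp p (S₁.padded N) (S₂.padded N) = Wp p S₁ S₂ := by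
  rw [Wp_eq_transportCost_rpow hp, Wp_eq_transportCost_rpow hp]
  congr 1
  refine (transportCost_comp_of_injective (Fin.castLE_injective h₁) (Fin.castLE_injective h₂) _
    (padded_w_eq_zero h₁) (padded_w_eq_zero h₂)).symm.trans ?_
  simp [padded, comp_def, pad_castLE]

noncomputable def ofColumns (M : Matrix (Fin (d + 1)) (Fin (2 * N)) ℝ)
    (c : Fin N → Fin (2 * N)) : WPS (EuclideanSpace ℝ (Fin d)) :=
  ⟨N, fun j => WithLp.toLp 2 fun r => M r.castSucc (c j), fun j => M (Fin.last d) (c j)⟩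

lemma ofColumns_beta_left (S₁ S₂ : WPS (EuclideanSpace ℝ (Fin d))) :
    ofColumns (beta N S₁ S₂) (fun j => ⟨j, by omega⟩) = S₁.padded N := by
  simp only [ofColumns, padded, mk.injEq, heq_eq_eq, true_and]
  constructor <;> funext j
  · ext r
    simp [beta]
  · simp [beta]

lemma ofColumns_beta_right (S₁ S₂ : WPS (EuclideanSpace ℝ (Fin d))) :
    ofColumns (beta N S₁ S₂) (fun j => ⟨N + j, by omega⟩) = S₂.padded N := by
  simp only [ofColumns, padded, mk.injEq, heq_eq_eq, true_and]
  constructor <;> funext j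
  · ext r
    simp [beta]
  · simp [beta]

end WPS

theorem wasserstein_mlp_approximation_general
    (d N : ℕ) (p : ℝ) (hp : 1 ≤ p)
    (K : Set (EuclideanSpace ℝ (Fin d)))
    (ε : ℝ) (hε : 0 < ε) :
    ∃ f : Matrix (Fin (d + 1)) (Fin (2 * N)) ℝ → ℝ,
      ContinuousOn f
        {M | ∃ S₁ S₂ : WPS (EuclideanSpace ℝ (Fin d)),
          WPS.MemX K N S₁ ∧ WPS.MemX K N S₂ ∧ M = WPS.beta N S₁ S₂} ∧
      ∀ S₁ S₂ : WPS (EuclideanSpace ℝ (Fin d)),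
        WPS.MemX K N S₁ → WPS.MemX K N S₂ →
        |WPS.Wp p S₁ S₂ - f (WPS.beta N S₁ S₂)| < ε := by
  have hp₀ : 0 < p := by linarith
  refine ⟨fun M => WPS.Wp p (WPS.ofColumns M fun j => ⟨j, by omega⟩)
    (WPS.ofColumns M fun j => ⟨N + j, by omega⟩), ?_, fun S₁ S₂ h₁ h₂ => ?_⟩
  · refine WPS.continuousOn_Wp_mk hp₀ (by fun_prop) (by fun_prop) (by fun_prop) (by fun_prop)
      ?_ ?_ <;> rintro _ ⟨S₁, S₂, h₁, h₂, rfl⟩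
    · exact (congrArg WPS.IsWeighted (WPS.ofColumns_beta_left (N := N) S₁ S₂)).mpr
        (h₁.1.padded h₁.2.1)
    · exact (congrArg WPS.IsWeighted (WPS.ofColumns_beta_right (N := N) S₁ S₂)).mpr
        (h₂.1.padded h₂.2.1)
  · dsimp only
    rw [WPS.ofColumns_beta_left, WPS.ofColumns_beta_right, WPS.Wp_padded hp₀ h₁.2.1 h₂.2.1,
      sub_self, abs_zero]
    exact hε

/-- Lemma B.1 of the paper.  Let `K ⊆ ℝ^d` be compact, `N ∈ ℕ`,
`1 ≤ p < ∞`, and let `𝒳` be the weighted point sets over `K` with at most `N` points.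
With `β : 𝒳 × 𝒳 → ℝ^{(d+1)×2N}` as above, for every `ε > 0` there is a continuous
function `f` on `Image(β)` such that `|W_p(S₁, S₂) − f(β(S₁, S₂))| < ε` for every
`(S₁, S₂) ∈ 𝒳 × 𝒳`. -/
theorem wasserstein_mlp_approximation
    (d N : ℕ) (p : ℝ) (hp : 1 ≤ p)
    (K : Set (EuclideanSpace ℝ (Fin d))) (hK : IsCompact K)
    (ε : ℝ) (hε : 0 < ε) :
    ∃ f : Matrix (Fin (d + 1)) (Fin (2 * N)) ℝ → ℝ,
      ContinuousOn f
        {M | ∃ S₁ S₂ : WPS (EuclideanSpace ℝ (Fin d)),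
          WPS.MemX K N S₁ ∧ WPS.MemX K N S₂ ∧ M = WPS.beta N S₁ S₂} ∧
      ∀ S₁ S₂ : WPS (EuclideanSpace ℝ (Fin d)),
        WPS.MemX K N S₁ → WPS.MemX K N S₂ →
        |WPS.Wp p S₁ S₂ - f (WPS.beta N S₁ S₂)| < ε :=
  wasserstein_mlp_approximation_general d N p hp K ε hε
end

section
/- Let (Ω, d) be a compact metric space, δ > 0, and let {y_1,...,y_a} be a δ-net of Ω (the centers of a cover of Ω by balls of radius δ). Define h_j(x) = exp(−d(x, B_δ(y_j))) for j ∈ [a], where d(x, B_δ(y_j)) is the distance from x to the ball of radius δ around y_j, and h(x) = (h_1(x),...,h_a(x)). For a finite nonempty point set S ⊆ Ω, define the max-pooled encoding 𝐡(S) = max_{x∈S} h(x) ∈ ℝ^a (coordinatewise maximum), and define the decoded set g(v) = {y_j : v_j ≥ 1} for v ∈ ℝ^a. Then for every finite nonempty S ⊆ Ω, the Hausdorff distance between S and g(𝐡(S)) is at most δ. -/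
/-- max-pooling sketch for the Hausdorff distance, Appendix A of the
paper.  Let `(Ω, d)` be a compact metric space, `δ > 0`, and `y₁, …, y_a` a `δ`-net of
`Ω`.  Define `h_j(x) = exp(−d(x, B_δ(y_j)))`, the max-pooled encoding
`𝐡(S)_j = max_{x ∈ S} h_j(x)` for a finite nonempty `S ⊆ Ω`, and the decoded set
`g(v) = {y_j : v_j ≥ 1}`.  Then the Hausdorff distance between `S` and `g(𝐡(S))` is at
most `δ`. -/
theorem hausdorff_max_pooling_sketch
    (Ω : Type*) [MetricSpace Ω] [CompactSpace Ω]
    (δ : ℝ) (hδ : 0 < δ)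
    (a : ℕ) (y : Fin a → Ω)
    (hnet : ∀ x : Ω, ∃ j, dist x (y j) < δ)
    (S : Finset Ω) (hS : S.Nonempty) :
    let h : Ω → Fin a → ℝ :=
      fun x j => Real.exp (-(Metric.infDist x (Metric.ball (y j) δ)))
    let enc : Fin a → ℝ := fun j => S.sup' hS (fun x => h x j)
    let dec : Set Ω := y '' {j : Fin a | 1 ≤ enc j}
    Metric.hausdorffDist (↑S : Set Ω) dec ≤ δ := by
  intro h enc dec
  -- encoding coordinate ≥ 1 iff some point of S is within closed distance δ of y j
  have key : ∀ x : Ω, ∀ j : Fin a, (1 ≤ h x j ↔ Metric.infDist x (Metric.ball (y j) δ) ≤ 0) := by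
    intro x j
    simp only [h]
    rw [show (1:ℝ) = Real.exp 0 by simp, Real.exp_le_exp]
    constructor <;> intro hh <;> linarith
  apply Metric.hausdorffDist_le_of_mem_dist hδ.le
  · intro x hx
    obtain ⟨j, hj⟩ := hnet x
    refine ⟨y j, ⟨j, ?_, rfl⟩, hj.le⟩
    simp only [Set.mem_setOf_eq, enc]
    refine le_trans ?_ (Finset.le_sup' (fun z => h z j) hx)
    rw [key]
    have : x ∈ Metric.ball (y j) δ := by rwa [Metric.mem_ball]
    rw [Metric.infDist_zero_of_mem this]
  · rintro z ⟨j, hj, rfl⟩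
    simp only [Set.mem_setOf_eq, enc] at hj
    obtain ⟨x, hx, hxj⟩ := Finset.exists_mem_eq_sup' hS (fun z => h z j)
    rw [hxj, key] at hj
    have hnn : 0 ≤ Metric.infDist x (Metric.ball (y j) δ) := Metric.infDist_nonneg
    have h0 : Metric.infDist x (Metric.ball (y j) δ) = 0 := le_antisymm hj hnn
    have hne : (Metric.ball (y j) δ).Nonempty := ⟨y j, Metric.mem_ball_self hδ⟩
    have hcl : x ∈ closure (Metric.ball (y j) δ) := by
      rw [Metric.mem_closure_iff_infDist_zero hne]; exact h0
    have : x ∈ Metric.closedBall (y j) δ :=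
      Metric.closure_ball_subset_closedBall hcl
    refine ⟨x, by exact_mod_cast hx, ?_⟩
    rw [dist_comm]
    exact this
end
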